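/- arXiv:2509.13897 — 6 statements merged into one kernel-verified Lean document; each statement's English description precedes it below -/
import Mathlib

section
/- Let P be a real polynomial of degree n ≥ 1 all of whose zeros are real and negative, and suppose its coefficients are all positive. Let s > 0, α > 0 be real with s - α - n > 0, and define P̂(x) = x(1-x)P'(x) + (x(s-α) + α)P(x). Then P̂ has degree n+1 and all zeros of P̂ are real and negative. -/
open Polynomial Filter

lemma aux_prod_neg (T : Finset ℝ) (f : ℝ → ℝ) (h : ∀ x ∈ T, f x < 0) :
    0 < (-1:ℝ)^T.card * ∏ x ∈ T, f x := by
  classical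
  induction T using Finset.cons_induction with
  | empty => simp
  | cons a T ha ih =>
    have hfa := h a (Finset.mem_cons_self a T)
    have hT : 0 < (-1:ℝ)^T.card * ∏ x ∈ T, f x :=
      ih (fun x hx => h x (Finset.mem_cons_of_mem hx))
    rw [Finset.card_cons, Finset.prod_cons]
    have : (-1:ℝ)^(T.card+1) * (f a * ∏ x ∈ T, f x)
        = (-f a) * ((-1:ℝ)^T.card * ∏ x ∈ T, f x) := by ring
    rw [this]
    exact mul_pos (by linarith) hT


lemma aux_neg_inf (G : Polynomial ℝ) (d : ℕ) (hd : G.natDegree = d) (h1 : 1 ≤ d)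
    (hlc : 0 < G.leadingCoeff) (y : ℝ) : ∃ x, x < y ∧ 0 < (-1:ℝ)^d * G.eval x := by
  set H : Polynomial ℝ := (C ((-1:ℝ)^d) * G).comp (-X) with hH
  have hG0 : G ≠ 0 := fun h => by simp [h] at hlc
  have hc0 : ((-1:ℝ)^d) ≠ 0 := by positivity
  have hsq : ((-1:ℝ)^d) * ((-1:ℝ)^d) = 1 := by
    rw [← pow_add, ← two_mul, pow_mul]; norm_num
  have hnd : H.natDegree = d := by
    rw [hH, natDegree_comp, natDegree_C_mul hc0, hd]
    simp
  have hlcH : 0 < H.leadingCoeff := by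
    rw [hH, leadingCoeff_comp (by simp), leadingCoeff_mul, leadingCoeff_C,
      natDegree_C_mul hc0, hd]
    have : (-X : Polynomial ℝ).leadingCoeff = -1 := by
      rw [leadingCoeff_neg, leadingCoeff_X]
    rw [this]
    have : (-1:ℝ)^d * G.leadingCoeff * (-1:ℝ)^d = G.leadingCoeff := by
      nlinarith [hsq]
    rw [this]; exact hlc
  have hdegH : 0 < H.degree := natDegree_pos_iff_degree_pos.1 (by omega)
  have htt : Tendsto (fun x => H.eval x) atTop atTop :=
    H.tendsto_atTop_of_leadingCoeff_nonneg hdegH hlcH.le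
  obtain ⟨x, hx1, hx2⟩ := ((htt.eventually_ge_atTop 1).and (eventually_gt_atTop (-y))).exists
  refine ⟨-x, by linarith, ?_⟩
  have : H.eval x = (-1:ℝ)^d * G.eval (-x) := by
    rw [hH, eval_comp, eval_mul, eval_C, eval_neg, eval_X]
  linarith [this ▸ hx1]


lemma aux_ivt (G : Polynomial ℝ) (a b : ℝ) (hab : a < b)
    (h : G.eval a * G.eval b < 0) : ∃ c, a < c ∧ c < b ∧ G.eval c = 0 := by
  have hcont : ContinuousOn (fun x => G.eval x) (Set.Icc a b) :=
    (G.continuous_aeval).continuousOn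
  rcases mul_neg_iff.1 h with ⟨hpa, hnb⟩ | ⟨hna, hpb⟩
  · obtain ⟨c, hc, hc0⟩ := intermediate_value_Ioo' hab.le hcont ⟨hnb, hpa⟩
    exact ⟨c, hc.1, hc.2, hc0⟩
  · obtain ⟨c, hc, hc0⟩ := intermediate_value_Ioo hab.le hcont ⟨hna, hpb⟩
    exact ⟨c, hc.1, hc.2, hc0⟩

lemma aux_chain_le_getLast : ∀ (l : List ℝ) (x : ℝ),
    List.Chain (· < ·) x l → x ≤ l.getLastD x := by
  intro l
  induction l with
  | nil => intro x _; simp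
  | cons b l ih =>
    intro x hc
    rw [List.Chain, List.isChain_cons_cons] at hc
    have := ih b hc.2
    rw [List.getLastD_cons]
    linarith [hc.1]

lemma aux_chain_roots (G : Polynomial ℝ) :
    ∀ (l : List ℝ) (x : ℝ),
      List.Chain (fun a b => a < b ∧ G.eval a * G.eval b < 0) x l →
      ∃ T : Finset ℝ, T.card = l.length ∧
        ∀ t ∈ T, G.eval t = 0 ∧ x < t ∧ t < l.getLastD x := by
  intro l
  induction l with
  | nil => intro x _; exact ⟨∅, by simp, by simp⟩
  | cons b l ih =>
    intro x hc
    rw [List.Chain, List.isChain_cons_cons] at hc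
    obtain ⟨⟨hxb, hsign⟩, hchain⟩ := hc
    obtain ⟨c, hc1, hc2, hc0⟩ := aux_ivt G x b hxb hsign
    obtain ⟨T, hTcard, hT⟩ := ih b hchain
    have hble : b ≤ l.getLastD b :=
      aux_chain_le_getLast l b (hchain.imp fun a b h => h.1)
    have hcT : c ∉ T := fun h => by linarith [(hT c h).2.1]
    refine ⟨insert c T, ?_, ?_⟩
    · rw [Finset.card_insert_of_notMem hcT, hTcard]; simp
    · intro t ht
      rw [List.getLastD_cons]
      rcases Finset.mem_insert.1 ht with rfl | ht
      · exact ⟨hc0, hc1, by linarith⟩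
      · obtain ⟨h1, h2, h3⟩ := hT t ht
        exact ⟨h1, by linarith, h3⟩

open Polynomial

lemma aux_derivative_finset_prod (S : Finset ℝ) (f : ℝ → Polynomial ℝ) :
    derivative (∏ i ∈ S, f i) = ∑ i ∈ S, (∏ j ∈ S.erase i, f j) * derivative (f i) := by
  classical
  rw [Finset.prod_eq_multiset_prod, derivative_prod, Finset.sum_eq_multiset_sum]
  congr 1

lemma aux_deriv_fact (S : Finset ℝ) (m : ℝ → ℕ) (hm : ∀ r ∈ S, 1 ≤ m r) :
    derivative (∏ r ∈ S, (X - C r) ^ (m r)) =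
      (∏ r ∈ S, (X - C r) ^ (m r - 1)) *
        ∑ r ∈ S, C (m r : ℝ) * ∏ l ∈ S.erase r, (X - C l) := by
  classical
  rw [aux_derivative_finset_prod, Finset.mul_sum]
  apply Finset.sum_congr rfl
  intro r hr
  have hd : derivative ((X - C r) ^ (m r)) = C (m r : ℝ) * (X - C r) ^ (m r - 1) := by
    rw [derivative_pow, derivative_sub, derivative_X, derivative_C]
    ring
  rw [hd]
  have key : ∀ (T : Finset ℝ), (∀ l ∈ T, 1 ≤ m l) →
      ∏ l ∈ T, (X - C l) ^ (m l) = (∏ l ∈ T, (X - C l) ^ (m l - 1)) * ∏ l ∈ T, (X - C l) := by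
    intro T hT
    rw [← Finset.prod_mul_distrib]
    apply Finset.prod_congr rfl
    intro l hl
    conv_lhs => rw [← Nat.succ_pred_eq_of_pos (hT l hl)]
    rw [pow_succ, Nat.pred_eq_sub_one]
  have h1 : ∏ j ∈ S.erase r, (X - C j) ^ (m j)
      = (∏ j ∈ S.erase r, (X - C j) ^ (m j - 1)) * ∏ j ∈ S.erase r, (X - C j) :=
    key _ (fun l hl => hm l (Finset.mem_of_mem_erase hl))
  have h2 : ∏ l ∈ S, (X - C l) ^ (m l - 1)
      = (X - C r) ^ (m r - 1) * ∏ l ∈ S.erase r, (X - C l) ^ (m l - 1) :=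
    (Finset.mul_prod_erase S _ hr).symm
  rw [h1, h2]
  ring


set_option maxHeartbeats 1000000 in
theorem stmt_4 (n : ℕ) (hn : 1 ≤ n) (P : Polynomial ℝ) (hdeg : P.natDegree = n)
    (hcoeff : ∀ i ≤ n, 0 < P.coeff i)
    (hroots : ∀ z ∈ (P.map (algebraMap ℝ ℂ)).roots, z.im = 0 ∧ z.re < 0)
    (s α : ℝ) (hs : 0 < s) (hα : 0 < α) (hsan : 0 < s - α - n)
    (Q : Polynomial ℝ)
    (hQ : Q = X * (1 - X) * P.derivative + (C (s - α) * X + C α) * P) :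
    Q.natDegree = n + 1 ∧
      ∀ z ∈ (Q.map (algebraMap ℝ ℂ)).roots, z.im = 0 ∧ z.re < 0 := by
  classical
  set i := algebraMap ℝ ℂ with hi
  have hP0 : P ≠ 0 := by
    intro h
    have := hcoeff 0 (Nat.zero_le n)
    simp [h] at this
  have hsplit : (P.map i).Splits := IsAlgClosed.splits _
  set R : Multiset ℝ := (P.map i).roots.map Complex.re with hR
  have hcard : Multiset.card R = n := by
    rw [hR, Multiset.card_map, ← hsplit.natDegree_eq_card_roots, natDegree_map, hdeg]
  have hRneg : ∀ r ∈ R, r < 0 := by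
    intro r hr
    rw [hR, Multiset.mem_map] at hr
    obtain ⟨z, hz, rfl⟩ := hr
    exact (hroots z hz).2
  have hre : ∀ z ∈ (P.map i).roots, i z.re = z := by
    intro z hz
    apply Complex.ext <;> simp [hi, (hroots z hz).1]
  have hmaproots : (P.map i).roots = R.map (fun r => i r) := by
    rw [hR, Multiset.map_map]
    exact ((Multiset.map_congr rfl hre).trans (Multiset.map_id _)).symm
  set a := P.leadingCoeff with haa
  have ha : 0 < a := by
    rw [haa, Polynomial.leadingCoeff, hdeg]; exact hcoeff n le_rfl
  have hPfac : P = C a * (R.map fun r => X - C r).prod := by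
    apply Polynomial.map_injective i i.injective
    rw [hsplit.eq_prod_roots, leadingCoeff_map, hmaproots, Multiset.map_map,
      Polynomial.map_mul, map_C, Polynomial.map_multiset_prod, Multiset.map_map]
    congr 1
    rw [hR, Multiset.map_map, Multiset.map_map]
    refine congrArg Multiset.prod (Multiset.map_congr rfl ?_)
    intro z _
    simp
  set S := R.toFinset with hS
  set m : ℝ → ℕ := fun r => R.count r with hmdef
  have hm : ∀ r ∈ S, 1 ≤ m r := by
    intro r hr
    exact Multiset.count_pos.2 (Multiset.mem_toFinset.1 hr)
  have hsum : ∑ r ∈ S, m r = n := by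
    rw [hmdef, hS, Multiset.toFinset_sum_count_eq, hcard]
  have hSneg : ∀ r ∈ S, r < 0 := fun r hr => hRneg r (Multiset.mem_toFinset.1 hr)
  have hprodform : P = C a * ∏ r ∈ S, (X - C r) ^ (m r) := by
    rw [hPfac, Finset.prod_multiset_map_count]
  set k := S.card with hk
  have hk1 : 1 ≤ k := by
    rw [hk]
    have : S.Nonempty := Multiset.toFinset_nonempty.2 (Multiset.card_pos.1 (by omega))
    exact this.card_pos
  have hkn : k ≤ n := by
    calc k = ∑ r ∈ S, 1 := by simp [hk]
    _ ≤ ∑ r ∈ S, m r := Finset.sum_le_sum hm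
    _ = n := hsum
  -- definitions
  set D : Polynomial ℝ := ∏ r ∈ S, (X - C r) ^ (m r - 1) with hD
  set W : Polynomial ℝ := ∏ r ∈ S, (X - C r) with hW
  set V : Polynomial ℝ := ∑ r ∈ S, C (m r : ℝ) * ∏ l ∈ S.erase r, (X - C l) with hV
  set G : Polynomial ℝ := (X - X ^ 2) * V + (C (s - α) * X + C α) * W with hG
  have hpowsplit : ∏ r ∈ S, (X - C r) ^ (m r) = D * W := by
    rw [hD, hW, ← Finset.prod_mul_distrib]
    apply Finset.prod_congr rfl
    intro l hl
    conv_lhs => rw [← Nat.succ_pred_eq_of_pos (hm l hl)]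
    rw [pow_succ, Nat.pred_eq_sub_one]
  have hPDW : P = C a * (D * W) := by rw [hprodform, hpowsplit]
  have hPder : derivative P = C a * (D * V) := by
    rw [hprodform, derivative_C_mul, aux_deriv_fact S m hm, ← hD, ← hV]
  have hQfac : Q = C a * (D * G) := by
    rw [hQ, hPder, hPDW, hG]
    ring
  -- degrees
  have hWmonic : W.Monic := monic_prod_of_monic _ _ fun r _ => monic_X_sub_C r
  have hDmonic : D.Monic := monic_prod_of_monic _ _ fun r _ => (monic_X_sub_C r).pow _
  have hD0 : D ≠ 0 := hDmonic.ne_zero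
  have hW0 : W ≠ 0 := hWmonic.ne_zero
  have hWdeg : W.natDegree = k := by
    rw [hW, natDegree_prod _ _ fun r _ => X_sub_C_ne_zero r]
    simp [hk]
  have hDdegsum : D.natDegree = ∑ r ∈ S, (m r - 1) := by
    rw [hD, natDegree_prod _ _ fun r _ => pow_ne_zero _ (X_sub_C_ne_zero r)]
    simp [natDegree_pow]
  have hDdeg : D.natDegree = n - k := by
    have h1 : ∑ r ∈ S, (m r - 1) + k = n := by
      calc ∑ r ∈ S, (m r - 1) + k = ∑ r ∈ S, ((m r - 1) + 1) := by
            rw [Finset.sum_add_distrib]; simp [hk]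
      _ = ∑ r ∈ S, m r := Finset.sum_congr rfl fun r hr => Nat.sub_add_cancel (hm r hr)
      _ = n := hsum
    omega
  have hWr : ∀ r ∈ S, (∏ l ∈ S.erase r, (X - C l)).Monic :=
    fun r _ => monic_prod_of_monic _ _ fun l _ => monic_X_sub_C l
  have hWrdeg : ∀ r ∈ S, (∏ l ∈ S.erase r, (X - C l)).natDegree = k - 1 := by
    intro r hr
    rw [natDegree_prod _ _ fun l _ => X_sub_C_ne_zero l]
    simp [hk, Finset.card_erase_of_mem hr]
  have hVdeg : V.natDegree ≤ k - 1 := by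
    rw [hV]
    apply natDegree_sum_le_of_forall_le
    intro r hr
    exact (natDegree_C_mul_le _ _).trans (hWrdeg r hr).le
  have hVcoeff : V.coeff (k - 1) = (n : ℝ) := by
    rw [hV, finset_sum_coeff]
    have : ∀ r ∈ S, (C (m r : ℝ) * ∏ l ∈ S.erase r, (X - C l)).coeff (k - 1) = (m r : ℝ) := by
      intro r hr
      rw [coeff_C_mul]
      have := (hWr r hr).coeff_natDegree
      rw [hWrdeg r hr] at this
      rw [this, mul_one]
    rw [Finset.sum_congr rfl this, ← Nat.cast_sum, hsum]
  have hGcoeff : G.coeff (k + 1) = s - α - n := by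
    have e1 : G = (X * V - X ^ 2 * V) + (C (s - α) * (X * W) + C α * W) := by rw [hG]; ring
    have hVk : V.coeff k = 0 := coeff_eq_zero_of_natDegree_lt (by omega)
    have hWk1 : W.coeff (k + 1) = 0 := coeff_eq_zero_of_natDegree_lt (by omega)
    have hWk : W.coeff k = 1 := by
      have := hWmonic.coeff_natDegree
      rwa [hWdeg] at this
    have e2 : (X ^ 2 * V).coeff (k + 1) = (n : ℝ) := by
      have hidx : k + 1 = (k - 1) + 2 := by omega
      rw [hidx, coeff_X_pow_mul, hVcoeff]
    rw [e1, coeff_add, coeff_sub, coeff_add, coeff_C_mul, coeff_C_mul]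
    rw [show k + 1 = k + 1 by rfl]
    rw [coeff_X_mul, coeff_X_mul, hVk, e2, hWk, hWk1]
    ring
  have hGdegle : G.natDegree ≤ k + 1 := by
    rw [hG]
    have hA : ((X - X ^ 2) * V).natDegree ≤ k + 1 := by
      refine (natDegree_mul_le).trans ?_
      have h1 : (X - X ^ 2 : Polynomial ℝ).natDegree ≤ 2 :=
        (natDegree_sub_le _ _).trans (by simp)
      omega
    have hB : ((C (s - α) * X + C α) * W).natDegree ≤ k + 1 := by
      refine (natDegree_mul_le).trans ?_
      have h2 : (C (s - α) * X + C α : Polynomial ℝ).natDegree ≤ 1 := by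
        refine (natDegree_add_le _ _).trans ?_
        have h3 := natDegree_C_mul_le (s - α) (X : Polynomial ℝ)
        simp only [natDegree_C, natDegree_X] at *
        omega
      omega
    exact (natDegree_add_le _ _).trans (max_le hA hB)
  have hGcne : G.coeff (k + 1) ≠ 0 := by rw [hGcoeff]; linarith
  have hGdeg : G.natDegree = k + 1 :=
    le_antisymm hGdegle (le_natDegree_of_ne_zero hGcne)
  have hGlc : 0 < G.leadingCoeff := by
    rw [Polynomial.leadingCoeff, hGdeg, hGcoeff]; linarith
  have hG0 : G ≠ 0 := fun h => by simp [h] at hGcne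
  -- evaluations
  have hevalWr : ∀ r ∈ S, ∀ x : ℝ, (∏ l ∈ S.erase r, (X - C l)).eval x = ∏ l ∈ S.erase r, (x - l) := by
    intro r _ x
    rw [eval_prod]
    exact Finset.prod_congr rfl fun l _ => by simp
  have hevalV : ∀ r ∈ S, V.eval r = (m r : ℝ) * ∏ l ∈ S.erase r, (r - l) := by
    intro r hr
    rw [hV, eval_finset_sum]
    rw [Finset.sum_eq_single r]
    · rw [eval_mul, eval_C, hevalWr r hr r]
    · intro b hb hbr
      rw [eval_mul]
      have : (∏ l ∈ S.erase b, (X - C l)).eval r = 0 := by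
        rw [eval_prod]
        apply Finset.prod_eq_zero (Finset.mem_erase.2 ⟨(Ne.symm hbr), hr⟩)
        simp
      rw [this, mul_zero]
    · intro h; exact absurd hr h
  have hevalWzero : ∀ r ∈ S, W.eval r = 0 := by
    intro r hr
    rw [hW, eval_prod]
    apply Finset.prod_eq_zero hr
    simp
  have hevalG : ∀ r ∈ S, G.eval r = (r - r ^ 2) * ((m r : ℝ) * ∏ l ∈ S.erase r, (r - l)) := by
    intro r hr
    rw [hG]
    simp only [eval_add, eval_mul, eval_sub, eval_pow, eval_X, eval_C]
    rw [hevalWzero r hr, hevalV r hr]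
    ring
  have hevalG0 : 0 < G.eval 0 := by
    have hW0eval : W.eval 0 = ∏ l ∈ S, (0 - l) := by
      rw [hW, eval_prod]
      exact Finset.prod_congr rfl fun l _ => by simp
    have : G.eval 0 = α * ∏ l ∈ S, (0 - l) := by
      rw [hG]
      simp only [eval_add, eval_mul, eval_sub, eval_pow, eval_X, eval_C]
      rw [hW0eval]
      ring
    rw [this]
    apply mul_pos hα
    apply Finset.prod_pos
    intro l hl
    have := hSneg l hl
    linarith
  -- sorted list of distinct roots
  set L : List ℝ := S.sort (· ≤ ·) with hL
  have hLlen : L.length = k := by rw [hL, Finset.length_sort, hk]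
  have hLsorted : L.SortedLT := by rw [hL]; exact Finset.sortedLT_sort S
  have hLmem : ∀ x ∈ L, x ∈ S := fun x hx => (Finset.mem_sort _).1 hx
  have hmemL : ∀ x ∈ S, x ∈ L := fun x hx => (Finset.mem_sort _).2 hx
  have hmono : StrictMono L.get := hLsorted.strictMono_get
  have hLne : L ≠ [] := List.ne_nil_of_length_pos (by omega)
  set bmax : ℝ := L.getLast hLne with hbmax
  have hbmaxS : bmax ∈ S := hLmem _ (List.getLast_mem hLne)
  have hbmaxneg : bmax < 0 := hSneg _ hbmaxS
  have hbmax_get : bmax = L.get ⟨k - 1, by omega⟩ := by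
    rw [hbmax, List.getLast_eq_getElem, List.get_eq_getElem]
    congr 1
    simp only [Fin.val_mk]
    omega
  have hbmax_top : ∀ l ∈ S.erase bmax, l < bmax := by
    intro l hl
    obtain ⟨hlne, hlS⟩ := Finset.mem_erase.1 hl
    obtain ⟨j, hj⟩ := List.get_of_mem (hmemL l hlS)
    have hle : L.get j ≤ bmax := by
      rw [hbmax_get]
      apply hmono.monotone
      simp only [Fin.le_def]
      have := j.2
      omega
    rw [hj] at hle
    exact lt_of_le_of_ne hle hlne
  set b0 : ℝ := L.get ⟨0, by omega⟩ with hb0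
  have hb0S : b0 ∈ S := hLmem _ (List.get_mem L ⟨0, by omega⟩)
  have hb0neg : b0 < 0 := hSneg _ hb0S
  have hb0_bot : ∀ l ∈ S.erase b0, b0 < l := by
    intro l hl
    obtain ⟨hlne, hlS⟩ := Finset.mem_erase.1 hl
    obtain ⟨j, hj⟩ := List.get_of_mem (hmemL l hlS)
    have hle : b0 ≤ L.get j := by
      rw [hb0]
      apply hmono.monotone
      simp [Fin.le_def]
    rw [hj] at hle
    exact lt_of_le_of_ne hle (Ne.symm hlne)
  -- signs
  have hmpos : ∀ r ∈ S, (0:ℝ) < (m r : ℝ) := by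
    intro r hr
    exact_mod_cast Nat.cast_pos.2 (hm r hr)
  have hsign_max : G.eval bmax < 0 := by
    rw [hevalG bmax hbmaxS]
    have h1 : bmax - bmax ^ 2 < 0 := by nlinarith
    have h2 : 0 < (m bmax : ℝ) * ∏ l ∈ S.erase bmax, (bmax - l) := by
      apply mul_pos (hmpos bmax hbmaxS)
      apply Finset.prod_pos
      intro l hl
      have := hbmax_top l hl
      linarith
    exact mul_neg_of_neg_of_pos h1 h2
  have hsign_b0 : 0 < (-1:ℝ)^k * G.eval b0 := by
    rw [hevalG b0 hb0S]
    have hA : 0 < (-1:ℝ)^((S.erase b0).card) * ∏ l ∈ S.erase b0, (b0 - l) :=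
      aux_prod_neg _ _ (fun l hl => by have := hb0_bot l hl; linarith)
    rw [Finset.card_erase_of_mem hb0S, ← hk] at hA
    have hb2 : b0 - b0 ^ 2 < 0 := by nlinarith
    have hkk : k = (k - 1) + 1 := by omega
    rw [hkk, pow_succ]
    set A := ∏ l ∈ S.erase b0, (b0 - l) with hAdef
    have heq : (-1:ℝ)^(k-1) * (-1) * ((b0 - b0^2) * ((m b0:ℝ) * A))
        = ((-1:ℝ)^(k-1) * A) * ((m b0:ℝ) * (b0^2 - b0)) := by ring
    rw [heq]
    exact mul_pos hA (mul_pos (hmpos b0 hb0S) (by nlinarith))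
  obtain ⟨xm, hxlt, hxsign⟩ := aux_neg_inf G (k+1) hGdeg (by omega) hGlc b0
  have hsign_cross : G.eval xm * G.eval b0 < 0 := by
    have hpow : ((-1:ℝ)^(k+1)) * ((-1:ℝ)^k) = -1 := by
      rw [← pow_add]
      have h2 : k + 1 + k = 2*k + 1 := by omega
      rw [h2, pow_succ, pow_mul]
      norm_num
    have h := mul_pos hxsign hsign_b0
    have heq : ((-1:ℝ)^(k+1) * G.eval xm) * ((-1:ℝ)^k * G.eval b0)
        = (((-1:ℝ)^(k+1)) * ((-1:ℝ)^k)) * (G.eval xm * G.eval b0) := by ring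
    rw [heq, hpow] at h
    linarith
  -- adjacent sign changes
  have hadj : ∀ (i0 : ℕ) (h : i0 < L.length - 1),
      L.get ⟨i0, by omega⟩ < L.get ⟨i0+1, by omega⟩ ∧
        G.eval (L.get ⟨i0, by omega⟩) * G.eval (L.get ⟨i0+1, by omega⟩) < 0 := by
    intro i0 hi0
    set aa : ℝ := L.get ⟨i0, by omega⟩ with haadef
    set bb : ℝ := L.get ⟨i0+1, by omega⟩ with hbbdef
    have hab : aa < bb := hmono (by exact Fin.mk_lt_mk.2 (by omega))
    refine ⟨hab, ?_⟩
    have haaS : aa ∈ S := hLmem _ (List.get_mem L ⟨i0, by omega⟩)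
    have hbbS : bb ∈ S := hLmem _ (List.get_mem L ⟨i0+1, by omega⟩)
    have haaneg : aa < 0 := hSneg _ haaS
    have hbbneg : bb < 0 := hSneg _ hbbS
    have hgap : ∀ l ∈ S, l ≠ aa → l ≠ bb → (l < aa ∨ bb < l) := by
      intro l hlS hla hlb
      obtain ⟨j, hj⟩ := List.get_of_mem (hmemL l hlS)
      rcases le_or_gt (j:ℕ) i0 with h | h
      · left
        have hle : L.get j ≤ aa := by
          rw [haadef]
          apply hmono.monotone
          simp only [Fin.le_def]
          omega
        rw [hj] at hle
        exact lt_of_le_of_ne hle hla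
      · right
        have hle : bb ≤ L.get j := by
          rw [hbbdef]
          apply hmono.monotone
          simp only [Fin.le_def]
          omega
        rw [hj] at hle
        exact lt_of_le_of_ne hle (Ne.symm hlb)
    have hbbmem : bb ∈ S.erase aa := Finset.mem_erase.2 ⟨hab.ne', hbbS⟩
    have haamem : aa ∈ S.erase bb := Finset.mem_erase.2 ⟨hab.ne, haaS⟩
    have hAeq : ∏ l ∈ S.erase aa, (aa - l) = (aa - bb) * ∏ l ∈ (S.erase aa).erase bb, (aa - l) :=
      (Finset.mul_prod_erase _ _ hbbmem).symm
    have hBeq : ∏ l ∈ S.erase bb, (bb - l) = (bb - aa) * ∏ l ∈ (S.erase bb).erase aa, (bb - l) :=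
      (Finset.mul_prod_erase _ _ haamem).symm
    have hcomm : (S.erase bb).erase aa = (S.erase aa).erase bb := Finset.erase_right_comm
    have hpos2 : ∀ l ∈ (S.erase aa).erase bb, 0 < (aa - l) * (bb - l) := by
      intro l hl
      have hlb : l ≠ bb := (Finset.mem_erase.1 hl).1
      have hl' := (Finset.mem_erase.1 hl).2
      have hla : l ≠ aa := (Finset.mem_erase.1 hl').1
      have hlS : l ∈ S := (Finset.mem_erase.1 hl').2
      rcases hgap l hlS hla hlb with h | h
      · nlinarith
      · nlinarith
    have hABneg : (∏ l ∈ S.erase aa, (aa - l)) * (∏ l ∈ S.erase bb, (bb - l)) < 0 := by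
      rw [hAeq, hBeq, hcomm]
      have heq3 : (aa - bb) * (∏ l ∈ (S.erase aa).erase bb, (aa - l)) *
            ((bb - aa) * ∏ l ∈ (S.erase aa).erase bb, (bb - l))
          = ((aa - bb) * (bb - aa)) * ∏ l ∈ (S.erase aa).erase bb, ((aa - l) * (bb - l)) := by
        rw [Finset.prod_mul_distrib]
        ring
      rw [heq3]
      exact mul_neg_of_neg_of_pos (by nlinarith) (Finset.prod_pos hpos2)
    rw [hevalG aa haaS, hevalG bb hbbS]
    have heq2 : (aa - aa^2) * ((m aa:ℝ) * ∏ l ∈ S.erase aa, (aa - l)) *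
          ((bb - bb^2) * ((m bb:ℝ) * ∏ l ∈ S.erase bb, (bb - l)))
        = (((aa^2 - aa) * (bb^2 - bb)) * ((m aa:ℝ) * (m bb:ℝ))) *
          ((∏ l ∈ S.erase aa, (aa - l)) * (∏ l ∈ S.erase bb, (bb - l))) := by ring
    rw [heq2]
    apply mul_neg_of_pos_of_neg
    · apply mul_pos (mul_pos (by nlinarith) (by nlinarith))
        (mul_pos (hmpos aa haaS) (hmpos bb hbbS))
    · exact hABneg
  -- the chain
  have hchain : List.Chain (fun u v => u < v ∧ G.eval u * G.eval v < 0) xm L := by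
    rw [List.Chain, List.isChain_iff_getElem]
    intro i0 h
    rcases i0 with _ | i0
    · exact ⟨hxlt, hsign_cross⟩
    · exact hadj i0 (by simp at h; omega)
  obtain ⟨T, hTcard, hTprop⟩ := aux_chain_roots G L xm hchain
  have hgetLastD : L.getLastD xm = bmax := by
    rw [List.getLastD_eq_getLast?, List.getLast?_eq_getLast_of_ne_nil hLne]
    rfl
  obtain ⟨ctop, hctop1, hctop2, hctop0⟩ :=
    aux_ivt G bmax 0 hbmaxneg (mul_neg_of_neg_of_pos hsign_max hevalG0)
  have hctopT : ctop ∉ T := by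
    intro h
    have := (hTprop ctop h).2.2
    rw [hgetLastD] at this
    linarith
  set Tall : Finset ℝ := insert ctop T with hTalldef
  have hTallcard : Tall.card = k + 1 := by
    rw [hTalldef, Finset.card_insert_of_notMem hctopT, hTcard, hLlen]
  have hTallroots : ∀ t ∈ Tall, G.eval t = 0 ∧ t < 0 := by
    intro t ht
    rcases Finset.mem_insert.1 ht with rfl | ht
    · exact ⟨hctop0, hctop2⟩
    · obtain ⟨h1, h2, h3⟩ := hTprop t ht
      rw [hgetLastD] at h3
      exact ⟨h1, by linarith⟩
  -- G.roots
  have hleG : Tall.val ≤ G.roots := by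
    apply Finset.val_le_iff_val_subset.2
    intro x hx
    rw [mem_roots']
    exact ⟨hG0, (hTallroots x hx).1⟩
  have hGrootscard : Multiset.card G.roots = k + 1 := by
    refine le_antisymm (by rw [← hGdeg]; exact card_roots' G) ?_
    calc k + 1 = Tall.card := hTallcard.symm
    _ ≤ Multiset.card G.roots := Multiset.card_le_card hleG
  have hGrootseq : G.roots = Tall.val :=
    (Multiset.eq_of_le_of_card_le hleG (by rw [hGrootscard, ← hTallcard]; rfl)).symm
  have hGrootsneg : ∀ x ∈ G.roots, x < 0 := by
    rw [hGrootseq]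
    exact fun x hx => (hTallroots x hx).2
  -- D.roots
  have hDroots : D.roots = S.val.bind fun r => (m r - 1) • ({r} : Multiset ℝ) := by
    rw [hD, roots_prod _ _ (by rw [← hD]; exact hD0)]
    congr 1
    funext r
    rw [roots_pow, roots_X_sub_C]
  have hDrootsneg : ∀ x ∈ D.roots, x < 0 := by
    intro x hx
    rw [hDroots] at hx
    obtain ⟨r, hr, hx⟩ := Multiset.mem_bind.1 hx
    have := (Multiset.mem_nsmul.1 hx).2
    rw [Multiset.mem_singleton] at this
    subst this
    exact hSneg x hr
  have hDrootscard : Multiset.card D.roots = n - k := by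
    rw [hDroots, Multiset.card_bind, ← hDdeg, hDdegsum]
    rw [Finset.sum_eq_multiset_sum]
    congr 1
    apply Multiset.map_congr rfl
    intro r _
    simp
  -- assemble
  have hQdeg : Q.natDegree = n + 1 := by
    rw [hQfac, natDegree_C_mul ha.ne', natDegree_mul hD0 hG0, hDdeg, hGdeg]
    omega
  have hQroots : Q.roots = D.roots + G.roots := by
    rw [hQfac, roots_C_mul _ ha.ne', roots_mul (mul_ne_zero hD0 hG0)]
  have hQrootscard : Multiset.card Q.roots = n + 1 := by
    rw [hQroots, Multiset.card_add, hDrootscard, hGrootscard]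
    omega
  have hQsplits : Q.Splits :=
    (splits_iff_card_roots).2 (by rw [hQrootscard, hQdeg])
  refine ⟨hQdeg, ?_⟩
  intro z hz
  rw [hQsplits.roots_map i] at hz
  obtain ⟨r, hr, rfl⟩ := Multiset.mem_map.1 hz
  have hrneg : r < 0 := by
    rw [hQroots] at hr
    rcases Multiset.mem_add.1 hr with h | h
    · exact hDrootsneg r h
    · exact hGrootsneg r h
  constructor
  · simp [hi]
  · simpa [hi] using hrneg
end

section
/- Let P be a real polynomial of degree n ≥ 1 with positive leading coefficient and only simple real negative zeros x_n < ⋯ < x_1 < 0. Let s > 0, α > 0 with s - α - n > 0, and P̂(x) = x(1-x)P'(x) + (x(s-α)+α)P(x). Then P̂ has n+1 simple real negative zeros x̂_{n+1} < ⋯ < x̂_1 < 0 which strictly interlace with those of P: x̂_{n+1} < x_n < x̂_n < ⋯ < x_1 < x̂_1 < 0. -/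
/-! At a zero `a` of `P` we have `P̂(a) = a (1 - a) P'(a)` with `a (1 - a) < 0`, so the signs of
`P̂` at `x₁ > ⋯ > xₙ` alternate, beginning with `P̂(x₁) < 0`, while `P̂(0) = α P(0) > 0`.
Moreover `P̂` has degree `n + 1` and leading coefficient `(s - α - n) c > 0`, so near `-∞` its sign
is `(-1)ⁿ⁺¹`. The intermediate value theorem gives a zero of `P̂` in each of the `n + 1` intervals
`(x₁, 0), (x₂, x₁), …, (-∞, xₙ)`, and these are all its zeros. -/

open Polynomial Finset Filter Lagrange

section Sign

variable {R : Type*} [CommRing R] [LinearOrder R] [IsStrictOrderedRing R]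

lemma neg_one_pow_card_mul_prod_pos {ι : Type*} (s : Finset ι) {f : ι → R}
    (hf : ∀ i ∈ s, f i < 0) : 0 < (-1) ^ #s * ∏ i ∈ s, f i := by
  rw [← prod_neg]
  exact prod_pos fun i hi => neg_pos.2 (hf i hi)

lemma neg_one_pow_mul_eval_derivative_nodal_pos {n : ℕ} {x : Fin n → R} (hx : StrictAnti x)
    (j : Fin n) : 0 < (-1) ^ (j : ℕ) * (nodal univ x).derivative.eval (x j) := by
  classical
  rw [eval_nodal_derivative_eval_node_eq (mem_univ j), eval_nodal]
  have hsplit : univ.erase j = Iio j ∪ Ioi j := by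
    ext i
    simp only [mem_erase, mem_univ, and_true, mem_union, mem_Iio, mem_Ioi]
    exact ne_iff_lt_or_gt
  rw [hsplit, prod_union (disjoint_Ioi_Iio j).symm, ← mul_assoc]
  refine mul_pos ?_ (prod_pos fun i hi => sub_pos.2 (hx (mem_Ioi.1 hi)))
  simpa using neg_one_pow_card_mul_prod_pos (Iio j) fun i hi => sub_neg.2 (hx (mem_Iio.1 hi))

end Sign

lemma exists_isRoot_mem_Ioo_of_eval_mul_neg (p : ℝ[X]) {a b : ℝ} (hab : a ≤ b)
    (h : p.eval a * p.eval b < 0) : ∃ z ∈ Set.Ioo a b, p.IsRoot z := by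
  have hcont : ContinuousOn (fun t => p.eval t) (Set.Icc a b) := p.continuousOn
  rcases lt_or_gt_of_ne (left_ne_zero_of_mul h.ne) with ha | ha
  · exact intermediate_value_Ioo hab hcont ⟨ha, pos_of_mul_neg_right h ha.le⟩
  · exact intermediate_value_Ioo' hab hcont ⟨neg_of_mul_neg_right h ha.le, ha⟩

lemma exists_strictAnti_isRoot_interlacing {k : ℕ} (p : ℝ[X]) {t : Fin (k + 1) → ℝ}
    (ht : StrictAnti t) (hsign : ∀ i : Fin (k + 1), 0 < (-1) ^ (i : ℕ) * p.eval (t i)) :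
    ∃ y : Fin k → ℝ, StrictAnti y ∧
      ∀ i, p.IsRoot (y i) ∧ t i.succ < y i ∧ y i < t i.castSucc := by
  have hchange (i : Fin k) : p.eval (t i.succ) * p.eval (t i.castSucc) < 0 := by
    have h := mul_pos (hsign i.succ) (hsign i.castSucc)
    have hsq : ((-1 : ℝ) ^ (i : ℕ)) ^ 2 = 1 := by rw [← pow_mul, mul_comm, pow_mul]; norm_num
    rw [Fin.val_succ, Fin.val_castSucc, pow_succ] at h
    nlinarith
  choose y hy hroot using fun i => exists_isRoot_mem_Ioo_of_eval_mul_neg p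
    (ht (Fin.castSucc_lt_succ (i := i))).le (hchange i)
  refine ⟨y, fun i j hij => ?_, fun i => ⟨hroot i, hy i⟩⟩
  calc y j < t j.castSucc := (hy j).2
    _ ≤ t i.succ := ht.antitone (Fin.succ_le_castSucc_iff.2 hij)
    _ < y i := (hy i).1

lemma exists_lt_neg_one_pow_natDegree_mul_eval_pos {p : ℝ[X]} (hdeg : 0 < p.natDegree)
    (hlc : 0 < p.leadingCoeff) (a : ℝ) : ∃ T < a, 0 < (-1) ^ p.natDegree * p.eval T := by
  set q := C ((-1) ^ p.natDegree) * p.comp (-X)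
  have hqdeg : q.natDegree = p.natDegree := by
    rw [natDegree_C_mul (pow_ne_zero _ (by norm_num)), natDegree_comp]
    simp
  have hqlc : q.leadingCoeff = p.leadingCoeff := by
    simp [q, leadingCoeff_mul, ← mul_assoc, ← mul_pow]
  have hq : Tendsto (fun x => q.eval x) atTop atTop :=
    tendsto_atTop_of_leadingCoeff_nonneg q (natDegree_pos_iff_degree_pos.1 (hqdeg ▸ hdeg))
      (hqlc ▸ hlc.le)
  obtain ⟨T, hT, hTa⟩ :=
    (((hq.comp tendsto_neg_atBot_atTop).eventually_gt_atTop 0).and (eventually_lt_atBot a)).exists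
  exact ⟨T, hTa, by simpa [q] using hT⟩

lemma eq_C_leadingCoeff_mul_prod_X_sub_C {R : Type*} [CommRing R] [IsDomain R] {k : ℕ} {p : R[X]}
    (hdeg : p.natDegree ≤ k) {y : Fin k → R} (hy : Function.Injective y)
    (hroot : ∀ i, p.IsRoot (y i)) : p = C p.leadingCoeff * ∏ i, (X - C (y i)) := by
  rcases eq_or_ne p 0 with rfl | hp
  · simp
  have hle : univ.val.map y ≤ p.roots := by
    refine (Multiset.le_iff_subset (univ.nodup.map hy)).2 fun a ha => ?_
    obtain ⟨i, -, rfl⟩ := Multiset.mem_map.1 ha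
    exact (mem_roots hp).2 (hroot i)
  have hroots : univ.val.map y = p.roots :=
    Multiset.eq_of_le_of_card_le hle (by simpa using (card_roots' p).trans hdeg)
  have hcard : Multiset.card p.roots = p.natDegree :=
    le_antisymm (card_roots' p) (by simpa [← hroots] using hdeg)
  conv_lhs => rw [← C_leadingCoeff_mul_prod_multiset_X_sub_C hcard, ← hroots, Multiset.map_map]
  rfl

lemma StrictAnti.snoc {β : Type*} [Preorder β] {n : ℕ} {f : Fin (n + 1) → β}
    (hf : StrictAnti f) {a : β} (ha : a < f (Fin.last n)) :
    StrictAnti (Fin.snoc f a : Fin (n + 2) → β) := by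
  refine Fin.strictAnti_iff_succ_lt.2 fun i => ?_
  induction i using Fin.lastCases with
  | last => simpa using ha
  | cast j =>
    rw [Fin.succ_castSucc, Fin.snoc_castSucc, Fin.snoc_castSucc]
    exact hf (Fin.castSucc_lt_succ (i := j))

lemma exists_interlacing_roots {k : ℕ} {p : ℝ[X]} (hdeg : p.natDegree = k + 1)
    (hlc : 0 < p.leadingCoeff) {u : Fin (k + 1) → ℝ} (hu : StrictAnti u)
    (hsign : ∀ i : Fin (k + 1), 0 < (-1) ^ (i : ℕ) * p.eval (u i)) :
    ∃ y : Fin (k + 1) → ℝ, p = C p.leadingCoeff * ∏ i, (X - C (y i)) ∧ StrictAnti y ∧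
      (∀ i, y i < u i) ∧ ∀ i : Fin k, u i.succ < y i.castSucc := by
  obtain ⟨T, hTu, hT⟩ :=
    exists_lt_neg_one_pow_natDegree_mul_eval_pos (hdeg ▸ k.succ_pos) hlc (u (Fin.last k))
  set t : Fin (k + 2) → ℝ := Fin.snoc u T
  have hsign' : ∀ i : Fin (k + 2), 0 < (-1) ^ (i : ℕ) * p.eval (t i) := by
    refine Fin.lastCases ?_ fun i => ?_
    · simpa [t, hdeg] using hT
    · simpa [t] using hsign i
  obtain ⟨y, hy, hroot⟩ := exists_strictAnti_isRoot_interlacing p (t := t) (hu.snoc hTu) hsign'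
  refine ⟨y, eq_C_leadingCoeff_mul_prod_X_sub_C hdeg.le hy.injective fun i => (hroot i).1, hy,
    fun i => by simpa [t] using (hroot i).2.2, fun i => ?_⟩
  simpa only [t, Fin.succ_castSucc, Fin.snoc_castSucc] using (hroot i.castSucc).2.1

section HatTransform

variable {R : Type*} [CommRing R]

noncomputable def hatTransform (s α : R) (P : R[X]) : R[X] :=
  X * (1 - X) * derivative P + (C (s - α) * X + C α) * P

variable (s α : R) (P : R[X])

lemma eval_zero_hatTransform : (hatTransform s α P).eval 0 = α * P.eval 0 := by
  simp [hatTransform]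

lemma eval_hatTransform_of_isRoot {a : R} (ha : P.IsRoot a) :
    (hatTransform s α P).eval a = a * (1 - a) * P.derivative.eval a := by
  simp [hatTransform, ha.eq_zero]

lemma coeff_X_mul_derivative (n : ℕ) : (X * derivative P).coeff n = n * P.coeff n := by
  cases n with
  | zero => simp
  | succ n => simp [coeff_X_mul, coeff_derivative, mul_comm]

lemma coeff_hatTransform_succ (m : ℕ) :
    (hatTransform s α P).coeff (m + 1) =
      (m + 1 + α) * P.coeff (m + 1) + (s - α - m) * P.coeff m := by
  have h : hatTransform s α P =
      X * derivative P - X * (X * derivative P) + C (s - α) * (X * P) + C α * P := by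
    unfold hatTransform; ring
  rw [h, coeff_add, coeff_add, coeff_sub, coeff_X_mul_derivative, coeff_X_mul,
    coeff_X_mul_derivative, coeff_C_mul, coeff_C_mul, coeff_X_mul]
  push_cast
  ring

lemma natDegree_hatTransform_le : (hatTransform s α P).natDegree ≤ P.natDegree + 1 := by
  refine natDegree_le_iff_coeff_eq_zero.2 fun N hN => ?_
  obtain ⟨m, rfl⟩ := Nat.exists_eq_add_of_lt hN
  rw [coeff_hatTransform_succ, coeff_eq_zero_of_natDegree_lt (by omega),
    coeff_eq_zero_of_natDegree_lt (by omega)]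
  ring

lemma coeff_hatTransform_natDegree_add_one :
    (hatTransform s α P).coeff (P.natDegree + 1) = (s - α - P.natDegree) * P.leadingCoeff := by
  rw [coeff_hatTransform_succ, coeff_eq_zero_of_natDegree_lt (Nat.lt_succ_self _), leadingCoeff]
  ring

variable {s α P}

lemma natDegree_hatTransform (h : (s - α - P.natDegree) * P.leadingCoeff ≠ 0) :
    (hatTransform s α P).natDegree = P.natDegree + 1 :=
  natDegree_eq_of_le_of_coeff_ne_zero (natDegree_hatTransform_le s α P)
    (by rwa [coeff_hatTransform_natDegree_add_one])

lemma leadingCoeff_hatTransform (h : (s - α - P.natDegree) * P.leadingCoeff ≠ 0) :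
    (hatTransform s α P).leadingCoeff = (s - α - P.natDegree) * P.leadingCoeff := by
  rw [leadingCoeff, natDegree_hatTransform h, coeff_hatTransform_natDegree_add_one]

end HatTransform

lemma neg_one_pow_mul_eval_hatTransform_nodal_pos {n : ℕ} {c s α : ℝ} (hc : 0 < c)
    (hα : 0 < α) {x : Fin n → ℝ} (hxneg : ∀ i, x i < 0) (hx : StrictAnti x)
    (k : Fin (n + 1)) :
    0 < (-1) ^ (k : ℕ) *
      (hatTransform s α (C c * nodal univ x)).eval ((Fin.cons 0 x : Fin (n + 1) → ℝ) k) := by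
  induction k using Fin.cases with
  | zero =>
    have hP0 : 0 < (nodal univ x).eval 0 := by
      rw [eval_nodal]
      exact prod_pos fun i _ => by linarith [hxneg i]
    simp only [Fin.val_zero, pow_zero, one_mul, Fin.cons_zero, eval_zero_hatTransform, eval_mul,
      eval_C]
    positivity
  | succ i =>
    have hroot : (C c * nodal univ x).IsRoot (x i) := by
      simp [eval_nodal, prod_eq_zero (mem_univ i)]
    rw [Fin.cons_succ, eval_hatTransform_of_isRoot _ _ _ hroot, derivative_C_mul, eval_mul, eval_C]
    have hder := neg_one_pow_mul_eval_derivative_nodal_pos hx i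
    have hxi : 0 < x i * (x i - 1) := mul_pos_of_neg_of_neg (hxneg i) (by linarith [hxneg i])
    calc (0 : ℝ) < x i * (x i - 1) * c *
          ((-1) ^ (i : ℕ) * (nodal univ x).derivative.eval (x i)) := by positivity
      _ = _ := by rw [Fin.val_succ, pow_succ]; ring

theorem stmt_5_general (n : ℕ) (c : ℝ) (hc : 0 < c) (x : Fin n → ℝ)
    (hxneg : ∀ i, x i < 0) (hxmono : ∀ i j : Fin n, i < j → x j < x i)
    (s α : ℝ) (hα : 0 < α) (hsan : 0 < s - α - n)
    (P Q : Polynomial ℝ) (hP : P = C c * ∏ i, (X - C (x i)))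
    (hQ : Q = X * (1 - X) * P.derivative + (C (s - α) * X + C α) * P) :
    Q.natDegree = n + 1 ∧
    ∃ xh : Fin (n + 1) → ℝ,
      Q = C Q.leadingCoeff * ∏ i, (X - C (xh i)) ∧
      (∀ i j : Fin (n + 1), i < j → xh j < xh i) ∧
      xh 0 < 0 ∧
      (∀ i : Fin n, xh i.succ < x i ∧ x i < xh i.castSucc) := by
  have hx : StrictAnti x := fun i j hij => hxmono i j hij
  replace hP : P = C c * nodal univ x := hP
  replace hQ : Q = hatTransform s α P := hQ
  have hPdeg : P.natDegree = n := by
    rw [hP, natDegree_C_mul hc.ne', natDegree_nodal, card_univ, Fintype.card_fin]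
  have hPlc : P.leadingCoeff = c := by
    rw [hP, leadingCoeff_C_mul_of_isUnit hc.ne'.isUnit, nodal_monic.leadingCoeff, mul_one]
  have hlc : (s - α - P.natDegree) * P.leadingCoeff ≠ 0 := by
    rw [hPdeg, hPlc]; exact (mul_pos hsan hc).ne'
  have hQdeg : Q.natDegree = n + 1 := by rw [hQ, natDegree_hatTransform hlc, hPdeg]
  have hQlc : 0 < Q.leadingCoeff := by
    rw [hQ, leadingCoeff_hatTransform hlc, hPdeg, hPlc]; exact mul_pos hsan hc
  obtain ⟨xh, hfac, hanti, hlt, hgt⟩ := exists_interlacing_roots hQdeg hQlc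
    ((Fin.liftFun_cons (· > ·)).2 ⟨hxneg, hx⟩)
    (by simpa [hQ, hP] using neg_one_pow_mul_eval_hatTransform_nodal_pos hc hα hxneg hx)
  exact ⟨hQdeg, xh, hfac, fun i j hij => hanti hij, by simpa using hlt 0,
    fun i => ⟨by simpa using hlt i.succ, by simpa using hgt i⟩⟩

theorem stmt_5 (n : ℕ) (hn : 1 ≤ n) (c : ℝ) (hc : 0 < c) (x : Fin n → ℝ)
    (hxneg : ∀ i, x i < 0) (hxmono : ∀ i j : Fin n, i < j → x j < x i)
    (s α : ℝ) (hs : 0 < s) (hα : 0 < α) (hsan : 0 < s - α - n)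
    (P Q : Polynomial ℝ) (hP : P = C c * ∏ i, (X - C (x i)))
    (hQ : Q = X * (1 - X) * P.derivative + (C (s - α) * X + C α) * P) :
    Q.natDegree = n + 1 ∧
    ∃ xh : Fin (n + 1) → ℝ,
      Q = C Q.leadingCoeff * ∏ i, (X - C (xh i)) ∧
      (∀ i j : Fin (n + 1), i < j → xh j < xh i) ∧
      xh 0 < 0 ∧
      (∀ i : Fin n, xh i.succ < x i ∧ x i < xh i.castSucc) :=
  stmt_5_general n c hc x hxneg hxmono s α hα hsan P Q hP hQ
end

section
/- Let P be a real polynomial of degree n ≥ 0 with all zeros (if any) in the open interval (0,1), let s < 0 and α > 0, and define P̂(x) = x(1-x)P'(x) + (x(s-α)+α)P(x). Then P̂ has degree n+1 and all n+1 zeros of P̂ are real and lie in (0,1). -/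
/-!
Put `g(x) = x^α (1 - x)^(-s) P(x)`; then `g' = x^(α-1) (1 - x)^(-s-1) P̂`. Since `α > 0` and
`-s > 0`, `g` vanishes at `0`, at `1` and at the `k` distinct roots of `P`, so Rolle's theorem
yields `k + 1` roots of `P̂` in `(0,1)` that are not roots of `P`. A root of `P` of multiplicity `m`
is a root of `P̂` of multiplicity at least `m - 1`. Together these are `(n - k) + (k + 1) = n + 1`
roots in `(0,1)`, as many as the degree of `P̂`.
-/

open Polynomial Set

namespace Polynomial

section CommRing

variable {R : Type*} [CommRing R]

/-- The paper's `P̂`. -/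
noncomputable def hatOp (s α : R) (P : R[X]) : R[X] :=
  X * (1 - X) * derivative P + (C (s - α) * X + C α) * P

theorem coeff_X_mul_derivative (p : R[X]) (n : ℕ) :
    (X * derivative p).coeff n = n * p.coeff n := by
  cases n with
  | zero => simp
  | succ n => rw [coeff_X_mul, coeff_derivative, mul_comm]; push_cast; ring

theorem coeff_hatOp_succ (s α : R) (P : R[X]) (k : ℕ) :
    (hatOp s α P).coeff (k + 1) = (k + 1 + α) * P.coeff (k + 1) + (s - α - k) * P.coeff k := by
  have h : hatOp s α P =
      X * derivative P - X * (X * derivative P) + C (s - α) * (X * P) + C α * P := by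
    rw [hatOp]; ring
  rw [h, coeff_add, coeff_add, coeff_sub, coeff_X_mul_derivative, coeff_X_mul,
    coeff_X_mul_derivative, coeff_C_mul, coeff_X_mul, coeff_C_mul]
  push_cast; ring

theorem natDegree_hatOp [NoZeroDivisors R] {s α : R} {P : R[X]} (hP : P ≠ 0)
    (h : s - α - P.natDegree ≠ 0) : (hatOp s α P).natDegree = P.natDegree + 1 := by
  refine natDegree_eq_of_le_of_coeff_ne_zero ?_ ?_
  · refine natDegree_le_iff_coeff_eq_zero.2 fun N hN => ?_
    obtain ⟨k, rfl⟩ : ∃ k, N = k + 1 := ⟨N - 1, by omega⟩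
    rw [coeff_hatOp_succ, coeff_eq_zero_of_natDegree_lt (by omega : P.natDegree < k + 1),
      coeff_eq_zero_of_natDegree_lt (by omega : P.natDegree < k)]
    ring
  · rw [coeff_hatOp_succ, coeff_eq_zero_of_natDegree_lt (Nat.lt_succ_self _), mul_zero, zero_add]
    exact mul_ne_zero h (leadingCoeff_ne_zero.2 hP)

end CommRing

theorem natDegree_hatOp_of_lt {s α : ℝ} (h : s < α) {P : ℝ[X]} (hP : P ≠ 0) :
    (hatOp s α P).natDegree = P.natDegree + 1 :=
  natDegree_hatOp hP (by linarith [P.natDegree.cast_nonneg (α := ℝ)] : s - α - _ < 0).ne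

section CharZero

variable {R : Type*} [CommRing R] [IsDomain R] [CharZero R]

theorem rootMultiplicity_sub_one_le_rootMultiplicity_mul_derivative_add_mul {p A B : R[X]}
    (h : A * derivative p + B * p ≠ 0) (x : R) :
    p.rootMultiplicity x - 1 ≤ (A * derivative p + B * p).rootMultiplicity x := by
  rw [le_rootMultiplicity_iff h]
  refine dvd_add (Dvd.dvd.mul_left ?_ _) (Dvd.dvd.mul_left ?_ _)
  · exact (pow_dvd_pow _ (rootMultiplicity_sub_one_le_derivative_rootMultiplicity p x)).trans
      (pow_rootMultiplicity_dvd _ x)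
  · exact (pow_dvd_pow _ (Nat.sub_le _ 1)).trans (pow_rootMultiplicity_dvd p x)

theorem roots_sub_dedup_add_le_roots_mul_derivative_add_mul [DecidableEq R] {p A B : R[X]}
    (h : A * derivative p + B * p ≠ 0) {S : Finset R}
    (hS : ∀ x ∈ S, (A * derivative p + B * p).IsRoot x ∧ ¬ p.IsRoot x) :
    p.roots - p.roots.dedup + S.val ≤ (A * derivative p + B * p).roots := by
  refine Multiset.le_iff_count.2 fun x => ?_
  rw [Multiset.count_add, Multiset.count_sub, Multiset.count_dedup, count_roots, count_roots]
  by_cases hx : x ∈ S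
  · have hpx : p.rootMultiplicity x = 0 := rootMultiplicity_eq_zero (hS x hx).2
    rw [Multiset.count_eq_one_of_mem S.nodup hx, hpx]
    have := (rootMultiplicity_pos h).2 (hS x hx).1
    omega
  · rw [Multiset.count_eq_zero_of_notMem (by rwa [Finset.mem_val]), add_zero]
    have := rootMultiplicity_sub_one_le_rootMultiplicity_mul_derivative_add_mul h x
    split_ifs with hroot
    · exact this
    · rw [← count_roots, Multiset.count_eq_zero_of_notMem hroot]; exact Nat.zero_le _

end CharZero

theorem card_le_card_sdiff_add_one_of_hasDerivAt {f f' : ℝ → ℝ} {a b : ℝ} {Z t : Finset ℝ}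
    (hZ : ∀ x ∈ Z, x ∈ Icc a b ∧ f x = 0) (hf : ContinuousOn f (Icc a b))
    (hf' : ∀ x ∈ Ioo a b, HasDerivAt f (f' x) x) (ht : ∀ x ∈ Ioo a b, f' x = 0 → x ∈ t) :
    Z.card ≤ (t \ Z).card + 1 := by
  refine Finset.card_le_sdiff_of_interleaved fun x hx y hy hxy _ => ?_
  obtain ⟨hxI, hfx⟩ := hZ x hx
  obtain ⟨hyI, hfy⟩ := hZ y hy
  have hsub : Icc x y ⊆ Icc a b := Icc_subset_Icc hxI.1 hyI.2
  obtain ⟨c, hc, hf'c⟩ := exists_hasDerivAt_eq_zero hxy (hf.mono hsub) (hfx.trans hfy.symm)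
    fun z hz => hf' z ⟨hxI.1.trans_lt hz.1, hz.2.trans_le hyI.2⟩
  exact ⟨c, ht c ⟨hxI.1.trans_lt hc.1, hc.2.trans_le hyI.2⟩ hf'c, hc⟩

theorem hasDerivAt_rpow_mul_one_sub_rpow_mul_eval (s α : ℝ) (P : ℝ[X]) {x : ℝ}
    (hx : x ∈ Ioo 0 1) :
    HasDerivAt (fun y => y ^ α * (1 - y) ^ (-s) * P.eval y)
      (x ^ (α - 1) * (1 - x) ^ (-s - 1) * (hatOp s α P).eval x) x := by
  obtain ⟨hx0, hx1⟩ := hx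
  have h1x : 0 < 1 - x := sub_pos.2 hx1
  have hxα : HasDerivAt (fun y => y ^ α) (α * x ^ (α - 1)) x :=
    Real.hasDerivAt_rpow_const (Or.inl hx0.ne')
  have h1xs : HasDerivAt (fun y => (1 - y) ^ (-s)) (-s * (1 - x) ^ (-s - 1) * -1) x :=
    (Real.hasDerivAt_rpow_const (Or.inl h1x.ne')).comp x ((hasDerivAt_id x).const_sub 1)
  refine ((hxα.mul h1xs).mul (P.hasDerivAt x)).congr_deriv ?_
  have ex : x ^ α = x ^ (α - 1) * x := by
    rw [← Real.rpow_add_one hx0.ne']; ring_nf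
  have e1x : (1 - x) ^ (-s) = (1 - x) ^ (-s - 1) * (1 - x) := by
    rw [← Real.rpow_add_one h1x.ne']; ring_nf
  simp only [Pi.mul_apply, hatOp, eval_add, eval_mul, eval_X, eval_sub, eval_one, eval_C, ex, e1x]
  ring

theorem exists_finset_roots_hatOp_Ioo {s α : ℝ} (hs : s < 0) (hα : 0 < α) {P : ℝ[X]}
    (hroots : ∀ x ∈ P.roots, x ∈ Ioo 0 1) (hQ : hatOp s α P ≠ 0) :
    ∃ S : Finset ℝ, P.roots.toFinset.card < S.card ∧
      ∀ x ∈ S, x ∈ Ioo 0 1 ∧ (hatOp s α P).IsRoot x ∧ ¬ P.IsRoot x := by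
  have hP : P ≠ 0 := by rintro rfl; simp [hatOp] at hQ
  set Z : Finset ℝ := insert 0 (insert 1 P.roots.toFinset)
  set t : Finset ℝ := (hatOp s α P).roots.toFinset.filter (· ∈ Ioo 0 1)
  set g : ℝ → ℝ := fun y => y ^ α * (1 - y) ^ (-s) * P.eval y
  have hzero : ∀ x ∈ Z, x ∈ Icc 0 1 ∧ g x = 0 := by
    intro x hx
    rcases Finset.mem_insert.1 hx with rfl | hx
    · exact ⟨left_mem_Icc.2 zero_le_one, by simp [g, Real.zero_rpow hα.ne']⟩
    rcases Finset.mem_insert.1 hx with rfl | hx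
    · exact ⟨right_mem_Icc.2 zero_le_one, by simp [g, Real.zero_rpow (neg_ne_zero.2 hs.ne)]⟩
    rw [Multiset.mem_toFinset] at hx
    exact ⟨Ioo_subset_Icc_self (hroots x hx), by simp [g, (isRoot_of_mem_roots hx).eq_zero]⟩
  have hcont : ContinuousOn g (Icc 0 1) :=
    (((Real.continuous_rpow_const hα.le).mul ((Real.continuous_rpow_const
      (neg_nonneg.2 hs.le)).comp (continuous_const.sub continuous_id))).mul
      P.continuous).continuousOn
  have hcrit : ∀ x ∈ Ioo (0 : ℝ) 1,
      x ^ (α - 1) * (1 - x) ^ (-s - 1) * (hatOp s α P).eval x = 0 → x ∈ t := by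
    intro x hx hx0
    have hpos : 0 < x ^ (α - 1) * (1 - x) ^ (-s - 1) :=
      mul_pos (Real.rpow_pos_of_pos hx.1 _) (Real.rpow_pos_of_pos (sub_pos.2 hx.2) _)
    rw [Finset.mem_filter, Multiset.mem_toFinset, mem_roots hQ]
    exact ⟨(mul_eq_zero.1 hx0).resolve_left hpos.ne', hx⟩
  have hZcard : Z.card = P.roots.toFinset.card + 2 := by
    rw [Finset.card_insert_of_notMem, Finset.card_insert_of_notMem] <;>
      simp only [Finset.mem_insert, Multiset.mem_toFinset] <;>
      grind
  have hrolle := card_le_card_sdiff_add_one_of_hasDerivAt hzero hcont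
    (fun x hx => hasDerivAt_rpow_mul_one_sub_rpow_mul_eval s α P hx) hcrit
  refine ⟨t \ Z, by omega, fun x hx => ?_⟩
  simp only [Finset.mem_sdiff, Finset.mem_filter, Multiset.mem_toFinset, mem_roots hQ,
    Finset.mem_insert, mem_roots hP, not_or, t, Z] at hx
  exact ⟨hx.1.2, hx.1.1, hx.2.2.2⟩

theorem splits_hatOp_and_roots_mem_Ioo {s α : ℝ} (hs : s < 0) (hα : 0 < α) {P : ℝ[X]}
    (hP : P ≠ 0) (hsplit : P.Splits) (hroots : ∀ x ∈ P.roots, x ∈ Ioo 0 1) :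
    (hatOp s α P).Splits ∧ ∀ x ∈ (hatOp s α P).roots, x ∈ Ioo 0 1 := by
  have hdeg : (hatOp s α P).natDegree = P.natDegree + 1 := natDegree_hatOp_of_lt (by linarith) hP
  have hQ : hatOp s α P ≠ 0 := fun h => by simp [h] at hdeg
  obtain ⟨S, hScard, hS⟩ := exists_finset_roots_hatOp_Ioo hs hα hroots hQ
  set M := P.roots - P.roots.dedup + S.val
  have hMle : M ≤ (hatOp s α P).roots :=
    roots_sub_dedup_add_le_roots_mul_derivative_add_mul (A := X * (1 - X)) hQ
      fun x hx => (hS x hx).2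
  have hMcard : (hatOp s α P).natDegree ≤ Multiset.card M := by
    have hdedup := Multiset.card_le_card (Multiset.dedup_le P.roots)
    rw [Multiset.card_toFinset] at hScard
    rw [Multiset.card_add, Multiset.card_sub (Multiset.dedup_le _), Finset.card_val, hdeg,
      hsplit.natDegree_eq_card_roots]
    omega
  have hMeq : M = (hatOp s α P).roots :=
    Multiset.eq_of_le_of_card_le hMle ((card_roots' _).trans hMcard)
  refine ⟨splits_iff_card_roots.2 (le_antisymm (card_roots' _) (hMeq ▸ hMcard)), fun x hx => ?_⟩
  rw [← hMeq, Multiset.mem_add] at hx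
  rcases hx with hx | hx
  · exact hroots x (Multiset.mem_of_le (Multiset.sub_le_self _ _) hx)
  · exact (hS x hx).1

theorem splits_of_forall_mem_roots_map_complex_im_eq_zero {P : ℝ[X]}
    (h : ∀ z ∈ (P.map (algebraMap ℝ ℂ)).roots, z.im = 0) : P.Splits :=
  Splits.of_splits_map (algebraMap ℝ ℂ) (IsAlgClosed.splits _) fun z hz =>
    ⟨z.re, Complex.ext rfl (by simp [h z hz])⟩

end Polynomial

theorem Multiset.exists_fin_eq_map_univ {α : Type*} {m : Multiset α} {k : ℕ}
    (h : Multiset.card m = k) : ∃ z : Fin k → α, m = Finset.univ.val.map z := by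
  subst h
  obtain ⟨l, rfl⟩ := Quot.exists_rep m
  refine ⟨fun i => l.get i, ?_⟩
  rw [Fin.univ_val_map]
  exact congrArg _ (List.ofFn_get l).symm

theorem stmt_7 (n : ℕ) (P : Polynomial ℝ) (hP0 : P ≠ 0) (hdeg : P.natDegree = n)
    (hroots : ∀ z ∈ (P.map (algebraMap ℝ ℂ)).roots, z.im = 0 ∧ 0 < z.re ∧ z.re < 1)
    (s α : ℝ) (hs : s < 0) (hα : 0 < α)
    (Q : Polynomial ℝ)
    (hQ : Q = X * (1 - X) * P.derivative + (C (s - α) * X + C α) * P) :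
    Q.natDegree = n + 1 ∧
    ∃ z : Fin (n + 1) → ℝ, (∀ i, 0 < z i ∧ z i < 1) ∧
      Q = C Q.leadingCoeff * ∏ i, (X - C (z i)) := by
  have hsplit : P.Splits :=
    splits_of_forall_mem_roots_map_complex_im_eq_zero fun z hz => (hroots z hz).1
  have hProots : ∀ x ∈ P.roots, x ∈ Ioo 0 1 := fun x hx =>
    (hroots (algebraMap ℝ ℂ x) (by rw [hsplit.roots_map]; exact Multiset.mem_map_of_mem _ hx)).2
  have hQhat : Q = hatOp s α P := hQ
  have hQdeg : Q.natDegree = n + 1 := hdeg ▸ hQhat ▸ natDegree_hatOp_of_lt (by linarith) hP0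
  obtain ⟨hQsplit, hQroots⟩ := hQhat ▸ splits_hatOp_and_roots_mem_Ioo hs hα hP0 hsplit hProots
  obtain ⟨z, hz⟩ :=
    Multiset.exists_fin_eq_map_univ (hQsplit.natDegree_eq_card_roots.symm.trans hQdeg)
  refine ⟨hQdeg, z, fun i => hQroots _ (hz ▸ Multiset.mem_map_of_mem _ (Finset.mem_univ_val i)),
    ?_⟩
  conv_lhs => rw [hQsplit.eq_prod_roots, hz, Multiset.map_map]
  rfl
end

section
/- Suppose a > 0 and f₁,…,f_r > 0 and m₁,…,m_r are positive integers with f_j + m_j < a for all j. Then all zeros of the polynomial ŵ(x) = (1-x)^{m+a} · ∑_{n=0}^∞ [(f₁+m₁)_n ⋯ (f_r+m_r)_n / ((f₁)_n ⋯ (f_r)_n)] · ((a)_n/n!) xⁿ, where m = m₁+⋯+m_r, are real and negative. -/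
open Polynomial Filter

noncomputable def asc (a : ℝ) (n : ℕ) : ℝ := (ascPochhammer ℝ n).eval a

lemma asc_zero (a : ℝ) : asc a 0 = 1 := by simp [asc]

lemma asc_succ (a : ℝ) (n : ℕ) : asc a (n+1) = asc a n * (a + n) := by
  simp [asc, ascPochhammer_succ_eval]

lemma asc_pos {a : ℝ} (ha : 0 < a) (n : ℕ) : 0 < asc a n :=
  ascPochhammer_pos n a ha

lemma tendsto_ratio (d e : ℝ) :
    Tendsto (fun n : ℕ => ((n:ℝ)+d)/((n:ℝ)+e)) atTop (nhds 1) := by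
  have h1 : Tendsto (fun n : ℕ => (n:ℝ)+e) atTop atTop :=
    tendsto_atTop_add_const_right _ e tendsto_natCast_atTop_atTop
  have h2 : Tendsto (fun n : ℕ => ((n:ℝ)+e)⁻¹) atTop (nhds 0) :=
    h1.inv_tendsto_atTop
  have h3 : Tendsto (fun n : ℕ => 1 + (d-e)*((n:ℝ)+e)⁻¹) atTop (nhds 1) := by
    have := (tendsto_const_nhds (x := (1:ℝ))).add ((tendsto_const_nhds (x := d - e)).mul h2)
    simpa using this
  apply h3.congr'
  filter_upwards [h1.eventually_gt_atTop 0] with n hn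
  field_simp
  ring

/-- the basic sequence -/
noncomputable def seqv (ds : List ℝ) (a r : ℝ) (n : ℕ) : ℝ :=
  (ds.map (fun c => (n:ℝ)+c)).prod * (asc a n / (n.factorial : ℝ)) * r^n

lemma seqv_pos {ds : List ℝ} (hds : ∀ c ∈ ds, 0 < c) {a r : ℝ} (ha : 0 < a) (hr : 0 < r)
    (n : ℕ) : 0 < seqv ds a r n := by
  apply mul_pos (mul_pos _ (div_pos (asc_pos ha n) (by positivity))) (by positivity)
  apply List.prod_pos
  intro x hx
  simp only [List.mem_map] at hx
  obtain ⟨c, hc, rfl⟩ := hx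
  have := hds c hc; positivity

lemma seqv_succ {ds : List ℝ} (hds : ∀ c ∈ ds, 0 < c) {a r : ℝ} (ha : 0 < a) (n : ℕ) :
    seqv ds a r (n+1) = seqv ds a r n *
      ((ds.map (fun c => ((n:ℝ)+1+c)/((n:ℝ)+c))).prod * (((a:ℝ)+n) * r / ((n:ℝ)+1))) := by
  unfold seqv
  have hprod : (ds.map (fun c => ((n:ℝ)+1+c))).prod
      = (ds.map (fun c => (n:ℝ)+c)).prod * (ds.map (fun c => ((n:ℝ)+1+c)/((n:ℝ)+c))).prod := by
    rw [← List.prod_map_mul]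
    congr 1
    apply List.map_congr_left
    intro c hc
    have hc0 : (0:ℝ) < (n:ℝ) + c := by have := hds c hc; positivity
    field_simp
  have hfact : ((n+1).factorial : ℝ) = (n.factorial : ℝ) * ((n:ℝ)+1) := by
    push_cast [Nat.factorial_succ]; ring
  push_cast
  rw [asc_succ, hprod, hfact]
  have h1 : ((n:ℝ)+1) ≠ 0 := by positivity
  have h2 : (n.factorial : ℝ) ≠ 0 := by positivity
  field_simp
  push_cast
  ring

lemma summable_seqv (ds : List ℝ) (hds : ∀ c ∈ ds, 0 < c) {a r : ℝ} (ha : 0 < a)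
    (hr : 0 < r) (hr1 : r < 1) : Summable (seqv ds a r) := by
  have hprodlim : Tendsto (fun n : ℕ => (ds.map (fun c => ((n:ℝ)+1+c)/((n:ℝ)+c))).prod)
      atTop (nhds 1) := by
    induction ds with
    | nil => simp only [List.map_nil, List.prod_nil]; exact tendsto_const_nhds
    | cons c cs ih =>
      have h1 : Tendsto (fun n : ℕ => ((n:ℝ)+(1+c))/((n:ℝ)+c)) atTop (nhds 1) :=
        tendsto_ratio (1+c) c
      have h2 := ih (fun x hx => hds x (List.mem_cons_of_mem _ hx))
      have := (h1.mul h2)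
      simpa [add_assoc, mul_one] using this
  have hglim : Tendsto (fun n : ℕ =>
      (ds.map (fun c => ((n:ℝ)+1+c)/((n:ℝ)+c))).prod * (((a:ℝ)+n) * r / ((n:ℝ)+1)))
      atTop (nhds r) := by
    have h1 : Tendsto (fun n : ℕ => ((n:ℝ)+a)/((n:ℝ)+1)) atTop (nhds 1) := tendsto_ratio a 1
    have h2 : Tendsto (fun n : ℕ => (((a:ℝ)+n) * r / ((n:ℝ)+1))) atTop (nhds r) := by
      have := h1.mul (tendsto_const_nhds (x := r))
      simp only [one_mul] at this
      apply this.congr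
      intro n; ring
    have := hprodlim.mul h2
    simpa using this
  set r' := (1+r)/2 with hr'
  have hrr' : r < r' := by rw [hr']; linarith
  have hr'1 : r' < 1 := by rw [hr']; linarith
  apply summable_of_ratio_norm_eventually_le hr'1
  filter_upwards [hglim.eventually_le_const hrr'] with n hn
  rw [Real.norm_eq_abs, Real.norm_eq_abs,
    abs_of_pos (seqv_pos hds ha hr _), abs_of_pos (seqv_pos hds ha hr _),
    seqv_succ hds ha, mul_comm r' _]
  exact mul_le_mul_of_nonneg_left hn (le_of_lt (seqv_pos hds ha hr n))

section
variable (ds : List ℝ) (a : ℝ)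

/-- the term of our series -/
noncomputable def term (ds : List ℝ) (a : ℝ) (x : ℝ) (n : ℕ) : ℝ :=
  (ds.map (fun c => (n:ℝ)+c)).prod * (asc a n / (n.factorial : ℝ)) * x^n

/-- derivative term -/
noncomputable def dterm (ds : List ℝ) (a : ℝ) (x : ℝ) (n : ℕ) : ℝ :=
  (ds.map (fun c => (n:ℝ)+c)).prod * (asc a n / (n.factorial : ℝ)) * ((n:ℝ) * x^(n-1))

lemma Qprod_nonneg (hds : ∀ c ∈ ds, 0 < c) (n : ℕ) :
    0 ≤ (ds.map (fun c => (n:ℝ)+c)).prod := by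
  apply le_of_lt
  apply List.prod_pos
  intro x hx
  simp only [List.mem_map] at hx
  obtain ⟨c, hc, rfl⟩ := hx
  have := hds c hc; positivity

lemma term_norm_le (hds : ∀ c ∈ ds, 0 < c) (ha : 0 < a) {x r : ℝ} (hr : 0 < r)
    (hxr : |x| ≤ r) (n : ℕ) : ‖term ds a x n‖ ≤ seqv ds a r n := by
  have h1 : 0 ≤ (ds.map (fun c => (n:ℝ)+c)).prod * (asc a n / (n.factorial : ℝ)) :=
    mul_nonneg (Qprod_nonneg ds hds n) (div_nonneg (asc_pos ha n).le (Nat.cast_nonneg _))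
  rw [term, seqv, Real.norm_eq_abs, abs_mul, abs_of_nonneg h1, abs_pow]
  apply mul_le_mul_of_nonneg_left _ h1
  exact pow_le_pow_left₀ (abs_nonneg x) hxr n

lemma dterm_norm_le (hds : ∀ c ∈ ds, 0 < c) (ha : 0 < a) {x r : ℝ} (hr : 0 < r)
    (hxr : |x| ≤ r) (n : ℕ) : ‖dterm ds a x n‖ ≤ r⁻¹ * seqv (1 :: ds) a r n := by
  have h1 : 0 ≤ (ds.map (fun c => (n:ℝ)+c)).prod * (asc a n / (n.factorial : ℝ)) :=
    mul_nonneg (Qprod_nonneg ds hds n) (div_nonneg (asc_pos ha n).le (Nat.cast_nonneg _))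
  have key : |(n:ℝ) * x^(n-1)| ≤ ((n:ℝ)+1) * r^n / r := by
    rw [abs_mul, abs_pow, Nat.abs_cast]
    cases n with
    | zero => simp; positivity
    | succ k =>
      simp only [Nat.add_sub_cancel]
      have hxk : |x|^k ≤ r^k := pow_le_pow_left₀ (abs_nonneg x) hxr k
      have hrk : (0:ℝ) ≤ r^k := pow_nonneg hr.le k
      have hxk0 : (0:ℝ) ≤ |x|^k := pow_nonneg (abs_nonneg x) k
      have hstep : ((k:ℝ)+1+1) * r^(k+1)/r = ((k:ℝ)+1+1) * r^k := by
        rw [pow_succ]; field_simp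
      push_cast
      rw [hstep]
      nlinarith
  calc ‖dterm ds a x n‖ = ((ds.map (fun c => (n:ℝ)+c)).prod * (asc a n / (n.factorial : ℝ)))
        * |(n:ℝ) * x^(n-1)| := by
        rw [dterm, Real.norm_eq_abs, abs_mul, abs_of_nonneg h1]
    _ ≤ ((ds.map (fun c => (n:ℝ)+c)).prod * (asc a n / (n.factorial : ℝ)))
        * (((n:ℝ)+1) * r^n / r) := mul_le_mul_of_nonneg_left key h1
    _ = r⁻¹ * seqv (1 :: ds) a r n := by
        rw [seqv]
        simp only [List.map_cons, List.prod_cons]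
        field_simp

lemma summable_term (hds : ∀ c ∈ ds, 0 < c) (ha : 0 < a) {x : ℝ} (hx : |x| < 1) :
    Summable (term ds a x) := by
  set r := (1 + |x|)/2 with hrdef
  have hr : 0 < r := by positivity
  have h1 : |x| ≤ r := by rw [hrdef]; linarith
  have h2 : r < 1 := by rw [hrdef]; linarith
  exact Summable.of_norm_bounded (summable_seqv ds hds ha hr h2) (term_norm_le ds a hds ha hr h1)

lemma summable_dterm (hds : ∀ c ∈ ds, 0 < c) (ha : 0 < a) {x : ℝ} (hx : |x| < 1) :
    Summable (dterm ds a x) := by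
  set r := (1 + |x|)/2 with hrdef
  have hr : 0 < r := by positivity
  have h1 : |x| ≤ r := by rw [hrdef]; linarith
  have h2 : r < 1 := by rw [hrdef]; linarith
  refine Summable.of_norm_bounded (((summable_seqv (1::ds) (by
      intro c hc
      rcases List.mem_cons.1 hc with h|h
      · subst h; norm_num
      · exact hds c h) ha hr h2)).mul_left r⁻¹) (dterm_norm_le ds a hds ha hr h1)

lemma hasDerivAt_tsum_term (hds : ∀ c ∈ ds, 0 < c) (ha : 0 < a) {x : ℝ} (hx : |x| < 1) :
    HasDerivAt (fun y => ∑' n, term ds a y n) (∑' n, dterm ds a x n) x := by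
  set r := (1 + |x|)/2 with hrdef
  have hr : 0 < r := by positivity
  have h1 : |x| < r := by rw [hrdef]; linarith
  have h2 : r < 1 := by rw [hrdef]; linarith
  have hds1 : ∀ c ∈ (1:ℝ) :: ds, 0 < c := by
    intro c hc
    rcases List.mem_cons.1 hc with h|h
    · subst h; norm_num
    · exact hds c h
  refine hasDerivAt_tsum_of_isPreconnected
    (u := fun n => r⁻¹ * seqv (1::ds) a r n)
    (g := fun n y => term ds a y n) (g' := fun n y => dterm ds a y n)
    (((summable_seqv (1::ds) hds1 ha hr h2)).mul_left r⁻¹)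
    (Metric.isOpen_ball (x := (0:ℝ)) (ε := r)) ((convex_ball (0:ℝ) r).isPreconnected)
    ?_ ?_ (y₀ := 0) ?_ ?_ ?_
  · intro n y _
    have hpow : HasDerivAt (fun z : ℝ => z^n) ((n:ℝ) * y^(n-1)) y := hasDerivAt_pow n y
    have := hpow.const_mul ((ds.map (fun c => (n:ℝ)+c)).prod * (asc a n / (n.factorial : ℝ)))
    simpa [term, dterm, mul_assoc] using this
  · intro n y hy
    rw [Metric.mem_ball, Real.dist_eq, sub_zero] at hy
    exact dterm_norm_le ds a hds ha hr (le_of_lt hy) n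
  · rw [Metric.mem_ball, Real.dist_eq, sub_zero]; simpa using hr
  · apply summable_of_ne_finset_zero (s := {0})
    intro n hn
    simp only [Finset.mem_singleton] at hn
    simp [term, zero_pow hn]
  · rw [Metric.mem_ball, Real.dist_eq, sub_zero]; exact h1
end

lemma term_deriv_mul (ds : List ℝ) (a x : ℝ) (n : ℕ) :
    x * dterm ds a x n = (n:ℝ) * term ds a x n := by
  cases n with
  | zero => simp [dterm, term]
  | succ k =>
    simp only [dterm, term, Nat.add_sub_cancel, pow_succ]
    push_cast
    ring

lemma ode_binom {b : ℝ} (hb : 0 < b) {x : ℝ} (hx : |x| < 1) :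
    (1 - x) * (∑' n, dterm [] b x n) = b * (∑' n, term [] b x n) := by
  have hds : ∀ c ∈ ([]:List ℝ), 0 < c := by simp
  set D := ∑' n, dterm [] b x n with hD
  set T := ∑' n, term [] b x n with hT
  have h1 : HasSum (dterm [] b x) D := (summable_dterm [] b hds hb hx).hasSum
  have h2 : HasSum (fun n => dterm [] b x (n+1)) (D - dterm [] b x 0) := by
    refine (hasSum_nat_add_iff 1).mpr ?_
    rw [Finset.range_one, Finset.sum_singleton, sub_add_cancel]
    exact h1
  have h0 : dterm [] b x 0 = 0 := by simp [dterm]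
  rw [h0, sub_zero] at h2
  have key : ∀ n : ℕ, dterm [] b x (n+1) = (b + (n:ℝ)) * term [] b x n := by
    intro n
    simp only [dterm, term, List.map_nil, List.prod_nil, one_mul, Nat.add_sub_cancel]
    rw [asc_succ]
    have hfact : ((n+1).factorial : ℝ) = (n.factorial : ℝ) * ((n:ℝ)+1) := by
      push_cast [Nat.factorial_succ]; ring
    rw [hfact]
    have h2 : (n.factorial:ℝ) ≠ 0 := by positivity
    have h3 : ((n:ℝ)+1) ≠ 0 := by positivity
    push_cast
    field_simp
  have h3 : HasSum (fun n : ℕ => (b + (n:ℝ)) * term [] b x n) D := by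
    rw [show (fun n : ℕ => (b + (n:ℝ)) * term [] b x n) = fun n => dterm [] b x (n+1)
      from funext fun n => (key n).symm]
    exact h2
  have h4 : HasSum (fun n : ℕ => (n:ℝ) * term [] b x n) (x * D) := by
    have h := h1.mul_left x
    have e : (fun n => x * dterm [] b x n) = (fun n : ℕ => (n:ℝ) * term [] b x n) :=
      funext (term_deriv_mul [] b x)
    rwa [e] at h
  have h5 : HasSum (fun n : ℕ => b * term [] b x n) (D - x * D) := by
    have h := h3.sub h4
    have e : (fun n : ℕ => (b + (n:ℝ)) * term [] b x n - (n:ℝ) * term [] b x n)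
        = (fun n : ℕ => b * term [] b x n) := by funext n; ring
    rwa [e] at h
  have h6 : HasSum (fun n : ℕ => b * term [] b x n) (b * T) :=
    (summable_term [] b hds hb hx).hasSum.mul_left b
  have := h5.unique h6
  linarith [this]

lemma binomial_tsum {b : ℝ} (hb : 0 < b) {x : ℝ} (hx : |x| < 1) :
    (∑' n, term [] b x n) = (1-x) ^ (-b) := by
  have hds : ∀ c ∈ ([]:List ℝ), 0 < c := by simp
  set φ : ℝ → ℝ := fun y => (1-y) ^ b * (∑' n, term [] b y n) with hφ
  have hφ' : ∀ y : ℝ, |y| < 1 → HasDerivAt φ 0 y := by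
    intro y hy
    have h1y : 0 < 1 - y := by have := abs_lt.1 hy; linarith [this.2]
    have hT : HasDerivAt (fun z => ∑' n, term [] b z n) (∑' n, dterm [] b y n) y :=
      hasDerivAt_tsum_term [] b hds hb hy
    have hin : HasDerivAt (fun z : ℝ => 1 - z) (-1) y := by
      simpa using (hasDerivAt_id y).const_sub 1
    have hrp : HasDerivAt (fun z : ℝ => (1-z) ^ b)
        (b * (1-y) ^ (b-1) * (-1)) y :=
      (Real.hasDerivAt_rpow_const (x := 1-y) (p := b) (Or.inl h1y.ne')).comp y hin
    have hmul := hrp.mul hT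
    set T := ∑' n, term [] b y n
    set D := ∑' n, dterm [] b y n
    have hval : b * (1-y) ^ (b-1) * (-1) * T + (1-y) ^ b * D = 0 := by
      have hsplit : (1-y) ^ b = (1-y) ^ (b-1) * (1-y) := by
        have e : b - 1 + 1 = b := by ring
        calc (1-y)^b = (1-y)^(b-1+1) := by rw [e]
          _ = (1-y)^(b-1) * (1-y) := Real.rpow_add_one h1y.ne' (b-1)
      have hode : (1 - y) * D = b * T := ode_binom hb hy
      rw [hsplit]
      have e : b * (1-y) ^ (b-1) * (-1) * T + (1-y) ^ (b-1) * (1-y) * D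
          = (1-y) ^ (b-1) * ((1-y) * D - b * T) := by ring
      rw [e, hode]
      ring
    rw [hval] at hmul
    exact hmul
  have hT0 : (∑' n, term [] b (0:ℝ) n) = 1 := by
    have h := hasSum_single (f := term [] b 0) 0 (fun n hn => by simp [term, zero_pow hn])
    have h0 : term [] b 0 0 = 1 := by simp [term, asc_zero]
    rw [h0] at h
    exact h.tsum_eq
  have hφ0 : φ 0 = 1 := by
    show (1 - (0:ℝ)) ^ b * (∑' n, term [] b (0:ℝ) n) = 1
    rw [hT0]
    norm_num
  have hconst : φ x = 1 := by
    rcases lt_trichotomy x 0 with hx0 | hx0 | hx0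
    · have habs := abs_lt.1 hx
      have hcont : ContinuousOn φ (Set.Icc x 0) := by
        intro y hy
        have hy1 : |y| < 1 := by
          rw [Set.mem_Icc] at hy
          rw [abs_lt]; constructor <;> linarith [habs.1]
        exact (hφ' y hy1).continuousAt.continuousWithinAt
      obtain ⟨c, hc, hceq⟩ := exists_hasDerivAt_eq_slope φ (fun _ => 0) hx0 hcont
        (fun y hy => hφ' y (by
          rw [Set.mem_Ioo] at hy
          rw [abs_lt]; constructor <;> linarith [abs_lt.1 hx |>.1]))
      have hne : (0:ℝ) - x ≠ 0 := by linarith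
      have h := hceq.symm
      rw [div_eq_iff hne] at h
      have h2 : φ 0 = φ x := by linarith [h]
      rw [← h2, hφ0]
    · rw [hx0, hφ0]
    · have habs := abs_lt.1 hx
      have hcont : ContinuousOn φ (Set.Icc 0 x) := by
        intro y hy
        have hy1 : |y| < 1 := by
          rw [Set.mem_Icc] at hy
          rw [abs_lt]; constructor <;> linarith [habs.2]
        exact (hφ' y hy1).continuousAt.continuousWithinAt
      obtain ⟨c, hc, hceq⟩ := exists_hasDerivAt_eq_slope φ (fun _ => 0) hx0 hcont
        (fun y hy => hφ' y (by
          rw [Set.mem_Ioo] at hy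
          rw [abs_lt]; constructor <;> linarith [abs_lt.1 hx |>.2]))
      have hne : x - (0:ℝ) ≠ 0 := by linarith
      have h := hceq.symm
      rw [div_eq_iff hne] at h
      have h2 : φ x = φ 0 := by linarith [h]
      rw [h2, hφ0]
  have h1x : 0 < 1 - x := by have := abs_lt.1 hx; linarith [this.2]
  have hpos : (0:ℝ) < (1-x) ^ b := Real.rpow_pos_of_pos h1x b
  have hmain : (1-x) ^ b * (∑' n, term [] b x n) = 1 := hconst
  rw [Real.rpow_neg h1x.le]
  field_simp
  linarith [hmain]

noncomputable def Wp (a : ℝ) : List ℝ → Polynomial ℝ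
  | [] => 1
  | c :: cs => (C c + C (a + cs.length - c) * X) * Wp a cs
      + X * (1 - X) * derivative (Wp a cs)

lemma main_tsum (a : ℝ) (ha : 0 < a) (cs : List ℝ) (hcs : ∀ c ∈ cs, 0 < c) :
    ∀ {x : ℝ}, |x| < 1 →
    (∑' n, term cs a x n) = (1-x) ^ (-(a + (cs.length:ℝ))) * (Wp a cs).eval x := by
  induction cs with
  | nil =>
    intro x hx
    simp only [Wp, List.length_nil, Nat.cast_zero, add_zero, eval_one, mul_one]
    exact binomial_tsum ha hx
  | cons c ds ih =>
    intro x hx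
    have hds : ∀ c' ∈ ds, 0 < c' := fun c' hc' => hcs c' (List.mem_cons_of_mem _ hc')
    have hc : 0 < c := hcs c List.mem_cons_self
    have h1x : 0 < 1 - x := by have := abs_lt.1 hx; linarith [this.2]
    set k : ℝ := (ds.length : ℝ) with hk
    set b : ℝ := a + k with hb
    set W := Wp a ds with hW
    set E := W.eval x with hE
    set E' := (derivative W).eval x with hE'
    set D := ∑' n, dterm ds a x n with hD
    -- derivative identification
    have h1 : HasDerivAt (fun y => ∑' n, term ds a y n) D x :=
      hasDerivAt_tsum_term ds a hds ha hx
    have hrp : HasDerivAt (fun y : ℝ => (1-y) ^ (-b))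
        ((-b) * (1-x) ^ (-b-1) * (-1)) x := by
      have hin : HasDerivAt (fun z : ℝ => 1 - z) (-1) x := by
        simpa using (hasDerivAt_id x).const_sub 1
      exact (Real.hasDerivAt_rpow_const (x := 1-x) (p := -b)
        (Or.inl h1x.ne')).comp x hin
    have hpoly : HasDerivAt (fun y : ℝ => W.eval y) E' x := W.hasDerivAt x
    have h2 : HasDerivAt (fun y : ℝ => (1-y) ^ (-b) * W.eval y)
        ((-b) * (1-x) ^ (-b-1) * (-1) * E + (1-x) ^ (-b) * E') x := hrp.mul hpoly
    have heq : (fun y => ∑' n, term ds a y n) =ᶠ[nhds x]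
        (fun y : ℝ => (1-y) ^ (-b) * W.eval y) := by
      have hmem : Set.Ioo (-1:ℝ) 1 ∈ nhds x := by
        apply Ioo_mem_nhds <;> [linarith [abs_lt.1 hx |>.1]; linarith [abs_lt.1 hx |>.2]]
      filter_upwards [hmem] with y hy
      have : |y| < 1 := abs_lt.2 ⟨hy.1, hy.2⟩
      exact ih hds this
    have h1' : HasDerivAt (fun y : ℝ => (1-y) ^ (-b) * W.eval y) D x :=
      h1.congr_of_eventuallyEq heq.symm
    have hDval : D = (-b) * (1-x) ^ (-b-1) * (-1) * E + (1-x) ^ (-b) * E' :=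
      h1'.unique h2
    -- the new HasSum
    have hTsum : HasSum (term ds a x) (∑' n, term ds a x n) :=
      (summable_term ds a hds ha hx).hasSum
    have hDsum : HasSum (dterm ds a x) D := (summable_dterm ds a hds ha hx).hasSum
    have hTval : (∑' n, term ds a x n) = (1-x) ^ (-b) * E := ih hds hx
    have hnew : HasSum (term (c :: ds) a x) (c * ((1-x) ^ (-b) * E) + x * D) := by
      have h := (hTsum.mul_left c).add (hDsum.mul_left x)
      rw [hTval] at h
      have e : (fun n => c * term ds a x n + x * dterm ds a x n)
          = term (c :: ds) a x := by
        funext n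
        rw [term_deriv_mul]
        simp only [term, List.map_cons, List.prod_cons]
        ring
      rwa [e] at h
    rw [hnew.tsum_eq]
    -- now algebra
    have hsplit : (1-x) ^ (-b) = (1-x) ^ (-b-1) * (1-x) := by
      have e : -b - 1 + 1 = -b := by ring
      calc (1-x) ^ (-b) = (1-x) ^ (-b-1+1) := by rw [e]
        _ = (1-x) ^ (-b-1) * (1-x) := Real.rpow_add_one h1x.ne' (-b-1)
    have hexp : -(a + ((c :: ds).length : ℝ)) = -b - 1 := by
      simp only [List.length_cons, hb, hk]
      push_cast
      ring
    rw [hexp]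
    have heval : (Wp a (c :: ds)).eval x = (c + (b - c) * x) * E + x * (1-x) * E' := by
      show ((C c + C (a + (ds.length:ℝ) - c) * X) * W + X * (1 - X) * derivative W).eval x
          = _
      simp only [eval_add, eval_mul, eval_C, eval_X, eval_one, eval_sub, hE, hE', hb, hk]
    rw [heval, hDval, hsplit]
    ring

-- ============ Part 2: real-rootedness ============

lemma neg_prod_sign {k : ℕ} (s : Finset (Fin k)) (f : Fin k → ℝ) (h : ∀ i ∈ s, f i < 0) :
    ∏ i ∈ s, f i = (-1:ℝ)^s.card * ∏ i ∈ s, (-f i) := by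
  rw [← Finset.prod_const, ← Finset.prod_mul_distrib]
  exact Finset.prod_congr rfl (fun i _ => by ring)

lemma sign_block {k : ℕ} {ρ : Fin k → ℝ} (hρ : StrictAnti ρ) (j : Fin k) :
    0 < (-1:ℝ)^(j:ℕ) * ∏ i ∈ Finset.univ.erase j, (ρ j - ρ i) := by
  have hsplit : Finset.univ.erase j = Finset.Iio j ∪ Finset.Ioi j := by
    ext i
    simp only [Finset.mem_erase, Finset.mem_univ, and_true, Finset.mem_union,
      Finset.mem_Iio, Finset.mem_Ioi]
    exact ne_iff_lt_or_gt
  have hdisj : Disjoint (Finset.Iio j) (Finset.Ioi j) := by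
    rw [Finset.disjoint_left]
    intro i h1 h2
    rw [Finset.mem_Iio] at h1
    rw [Finset.mem_Ioi] at h2
    exact absurd h2 (not_lt.2 h1.le)
  have hcard : (Finset.Iio j).card = (j:ℕ) := by simp
  have hpos2 : 0 < ∏ i ∈ Finset.Ioi j, (ρ j - ρ i) :=
    Finset.prod_pos (fun i hi => by
      have h1 : j < i := Finset.mem_Ioi.1 hi
      have := hρ h1
      linarith)
  have hneg : ∀ i ∈ Finset.Iio j, ρ j - ρ i < 0 := fun i hi => by
    have h1 : i < j := Finset.mem_Iio.1 hi
    have := hρ h1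
    linarith
  have hpos1 : 0 < ∏ i ∈ Finset.Iio j, (-(ρ j - ρ i)) :=
    Finset.prod_pos (fun i hi => by have := hneg i hi; linarith)
  rw [hsplit, Finset.prod_union hdisj, neg_prod_sign _ _ hneg, hcard]
  have hsq : (-1:ℝ)^(j:ℕ) * (-1:ℝ)^(j:ℕ) = 1 := by
    rw [← pow_add, ← two_mul, pow_mul]
    norm_num
  have e : (-1:ℝ)^(j:ℕ) * (((-1:ℝ)^(j:ℕ) * ∏ i ∈ Finset.Iio j, -(ρ j - ρ i))
      * ∏ i ∈ Finset.Ioi j, (ρ j - ρ i))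
      = ((-1:ℝ)^(j:ℕ) * (-1:ℝ)^(j:ℕ)) * ((∏ i ∈ Finset.Iio j, -(ρ j - ρ i))
      * ∏ i ∈ Finset.Ioi j, (ρ j - ρ i)) := by ring
  rw [e, hsq, one_mul]
  exact mul_pos hpos1 hpos2

lemma eval_factored {k : ℕ} (e : ℝ) (ρ : Fin k → ℝ) (t : ℝ) :
    (C e * ∏ i, (X - C (ρ i))).eval t = e * ∏ i, (t - ρ i) := by
  simp [eval_prod]

lemma derivative_finset_prod {ι : Type*} [DecidableEq ι] (s : Finset ι) (f : ι → Polynomial ℝ) :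
    derivative (∏ i ∈ s, f i) = ∑ i ∈ s, (∏ j ∈ s.erase i, f j) * derivative (f i) := by
  induction s using Finset.induction with
  | empty => simp
  | @insert a s ha ih =>
    rw [Finset.prod_insert ha, derivative_mul, ih, Finset.sum_insert ha,
      Finset.erase_insert ha]
    rw [Finset.mul_sum]
    congr 1
    · exact mul_comm _ _
    · apply Finset.sum_congr rfl
      intro i hi
      have hia : i ≠ a := fun h => ha (h ▸ hi)
      rw [Finset.erase_insert_of_ne hia.symm, Finset.prod_insert (fun h => ha (Finset.mem_of_mem_erase h))]
      ring

lemma deriv_factored_eval {k : ℕ} (e : ℝ) (ρ : Fin k → ℝ) (j : Fin k) :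
    (derivative (C e * ∏ i, (X - C (ρ i)))).eval (ρ j)
      = e * ∏ i ∈ Finset.univ.erase j, (ρ j - ρ i) := by
  rw [derivative_C_mul, eval_mul, eval_C, derivative_finset_prod]
  congr 1
  rw [eval_finset_sum]
  rw [Finset.sum_eq_single j]
  · simp [eval_prod]
  · intro i _ hij
    have hj : j ∈ Finset.univ.erase i := Finset.mem_erase.2 ⟨(Ne.symm hij), Finset.mem_univ j⟩
    rw [eval_mul, eval_prod, Finset.prod_eq_zero hj (by simp)]
    ring
  · intro h
    exact absurd (Finset.mem_univ j) h

lemma root_of_sign_change {P : Polynomial ℝ} {u v : ℝ} (huv : u < v)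
    (h : P.eval u * P.eval v < 0) : ∃ s ∈ Set.Ioo u v, P.eval s = 0 := by
  have hcont : ContinuousOn (fun t => P.eval t) (Set.Icc u v) :=
    (Polynomial.continuous P).continuousOn
  rcases lt_trichotomy (P.eval u) 0 with h1|h1|h1
  · have h2 : 0 < P.eval v := by nlinarith
    obtain ⟨s, hs, hs0⟩ := intermediate_value_Ioo huv.le hcont (Set.mem_Ioo.2 ⟨h1, h2⟩)
    exact ⟨s, hs, hs0⟩
  · rw [h1] at h; simp at h
  · have h2 : P.eval v < 0 := by nlinarith
    obtain ⟨s, hs, hs0⟩ := intermediate_value_Ioo' huv.le hcont (Set.mem_Ioo.2 ⟨h2, h1⟩)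
    exact ⟨s, hs, hs0⟩

lemma exists_alternating_roots (P : Polynomial ℝ) (N : ℕ) (t : Fin (N+1) → ℝ)
    (ht : StrictAnti t) (hsign : ∀ j : Fin (N+1), 0 < (-1:ℝ)^(j:ℕ) * P.eval (t j)) :
    ∃ σ : Fin N → ℝ, StrictAnti σ ∧ (∀ j, P.eval (σ j) = 0)
      ∧ ∀ j : Fin N, t j.succ < σ j ∧ σ j < t j.castSucc := by
  have key : ∀ j : Fin N, ∃ s ∈ Set.Ioo (t j.succ) (t j.castSucc), P.eval s = 0 := by
    intro j
    apply root_of_sign_change (ht (show j.castSucc < j.succ from Fin.castSucc_lt_succ))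
    have h1 := hsign j.castSucc
    have h2 := hsign j.succ
    rw [Fin.coe_castSucc] at h1
    rw [Fin.val_succ] at h2
    have e : ((-1:ℝ)^((j:ℕ)+1)) = -(-1:ℝ)^(j:ℕ) := by rw [pow_succ]; ring
    rw [e] at h2
    have hsq : (-1:ℝ)^(j:ℕ) * (-1:ℝ)^(j:ℕ) = 1 := by
      rw [← pow_add, ← two_mul, pow_mul]
      norm_num
    nlinarith [h1, h2, hsq]
  choose σ hσmem hσroot using key
  refine ⟨σ, ?_, hσroot, fun j => ⟨(hσmem j).1, (hσmem j).2⟩⟩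
  intro i j hij
  have h1 : σ j < t j.castSucc := (hσmem j).2
  have h2 : t i.succ < σ i := (hσmem i).1
  have h3 : t j.castSucc ≤ t i.succ := by
    apply ht.antitone
    rw [Fin.le_def, Fin.val_succ, Fin.coe_castSucc]
    exact Nat.succ_le_of_lt hij
  linarith

lemma Wp_factored (a : ℝ) (cs : List ℝ) (h : ∀ x ∈ cs, 0 < x ∧ x < a) :
    ∃ (e : ℝ) (ρ : Fin cs.length → ℝ), 0 < e ∧ StrictAnti ρ ∧ (∀ i, ρ i < 0) ∧
      Wp a cs = C e * ∏ i, (X - C (ρ i)) := by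
  induction cs with
  | nil =>
    refine ⟨1, fun i => i.elim0, one_pos, fun i => i.elim0, fun i => i.elim0, ?_⟩
    simp [Wp]
  | cons c ds ih =>
    set k := ds.length with hkdef
    obtain ⟨e, ρ, he, hρa, hρneg, hfac⟩ := ih (fun x hx => h x (List.mem_cons_of_mem _ hx))
    obtain ⟨hc0, hca⟩ := h c List.mem_cons_self
    set W := Wp a ds with hWdef
    set b : ℝ := a + (k:ℝ) with hbdef
    have hPdef : Wp a (c :: ds) = (C c + C (b - c) * X) * W + X * (1 - X) * derivative W := by
      rw [Wp]
    obtain ⟨P, hPname⟩ : ∃ P, Wp a (c :: ds) = P := ⟨_, rfl⟩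
    rw [hPname] at hPdef ⊢
    -- basic facts about W
    have hmonic : (∏ i : Fin k, (X - C (ρ i))).Monic :=
      monic_prod_of_monic _ _ (fun i _ => monic_X_sub_C _)
    have hprod_deg : (∏ i : Fin k, (X - C (ρ i))).natDegree = k := by
      rw [natDegree_prod _ _ (fun i _ => X_sub_C_ne_zero (ρ i))]
      simp [natDegree_X_sub_C]
    have hWdeg : W.natDegree = k := by
      rw [hfac, natDegree_C_mul he.ne', hprod_deg]
    have hWcoeffk : W.coeff k = e := by
      rw [hfac, coeff_C_mul]
      have hm := hmonic.coeff_natDegree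
      rw [hprod_deg] at hm
      rw [hm, mul_one]
    have hWcoeffk1 : W.coeff (k+1) = 0 :=
      coeff_eq_zero_of_natDegree_lt (by rw [hWdeg]; omega)
    -- coefficient of P at k+1
    have hW'coeffk : (derivative W).coeff k = 0 := by
      rw [coeff_derivative, hWcoeffk1, zero_mul]
    have hPcoeff : P.coeff (k+1) = (a - c) * e := by
      rw [hPdef]
      rw [coeff_add]
      have h1 : ((C c + C (b - c) * X) * W).coeff (k+1) = (b - c) * e := by
        rw [add_mul, coeff_add, mul_assoc, coeff_C_mul, coeff_C_mul, hWcoeffk1,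
          coeff_X_mul, hWcoeffk]
        ring
      have h2 : (X * (1 - X) * derivative W).coeff (k+1) = -((k:ℝ) * e) := by
        have e1 : X * (1 - X) * derivative W = X * derivative W - derivative W * X^2 := by
          ring
        rw [e1, coeff_sub, coeff_X_mul, hW'coeffk, coeff_mul_X_pow']
        rcases Nat.eq_zero_or_pos k with hk0 | hk0
        · have hWc : derivative W = 0 := by
            obtain ⟨w0, hw0⟩ := Polynomial.natDegree_eq_zero.1 (hWdeg.trans hk0)
            rw [← hw0, derivative_C]
          simp [hWc, hk0]
        · rw [if_pos (by omega)]
          have e2 : k + 1 - 2 = k - 1 := by omega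
          rw [e2, coeff_derivative]
          have e3 : k - 1 + 1 = k := by omega
          rw [e3, hWcoeffk]
          rw [Nat.cast_sub hk0]
          push_cast
          ring
      rw [h1, h2, hbdef]
      push_cast
      ring
    -- degree bound for P
    have hPdegle : P.natDegree ≤ k + 1 := by
      rw [hPdef]
      apply (natDegree_add_le _ _).trans
      apply max_le
      · apply (natDegree_mul_le).trans
        have h1 : (C c + C (b - c) * X).natDegree ≤ 1 := by
          apply (natDegree_add_le _ _).trans
          apply max_le
          · simp
          · apply (natDegree_mul_le).trans
            simp
        omega
      · rcases eq_or_ne (derivative W) 0 with hd0 | hd0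
        · rw [hd0, mul_zero]
          simp
        · have hk1 : 1 ≤ k := by
            by_contra hk
            push_neg at hk
            interval_cases k
            · obtain ⟨w0, hw0⟩ := Polynomial.natDegree_eq_zero.1 hWdeg
              rw [← hw0, derivative_C] at hd0
              exact hd0 rfl
          have hdle : (derivative W).natDegree ≤ k - 1 := by
            have hd := natDegree_derivative_le W
            rw [hWdeg] at hd
            exact hd
          apply (natDegree_mul_le).trans
          have h2 : (X * (1 - X) : Polynomial ℝ).natDegree ≤ 2 := by
            apply (natDegree_mul_le).trans
            have h3 : (1 - X : Polynomial ℝ).natDegree ≤ 1 := by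
              apply (natDegree_sub_le _ _).trans
              simp
            simp only [natDegree_X]
            omega
          omega
    have hPne : P ≠ 0 := fun h0 => by
      rw [h0, coeff_zero] at hPcoeff
      nlinarith [hPcoeff]
    have hPdeg : P.natDegree = k + 1 := by
      apply le_antisymm hPdegle
      apply le_natDegree_of_ne_zero
      rw [hPcoeff]
      nlinarith
    have hPlead : P.leadingCoeff = (a - c) * e := by
      rw [Polynomial.leadingCoeff, hPdeg, hPcoeff]
    -- evaluations
    have hWeval : ∀ t, W.eval t = e * ∏ i, (t - ρ i) := fun t => by
      rw [hfac]; exact eval_factored e ρ t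
    have hPeval : ∀ t, P.eval t = (c + (b - c)*t) * W.eval t
        + t*(1-t)*(derivative W).eval t := fun t => by
      rw [hPdef]
      simp only [eval_add, eval_mul, eval_C, eval_X, eval_one, eval_sub]
    -- sign at 0
    have hsign0 : 0 < P.eval 0 := by
      rw [hPeval 0, hWeval 0]
      simp only [mul_zero, add_zero, zero_mul, sub_zero, zero_sub, mul_one, one_mul]
      have hp : 0 < ∏ i : Fin k, -ρ i := Finset.prod_pos (fun i _ => by
        have := hρneg i; linarith)
      nlinarith [hp, mul_pos hc0 (mul_pos he hp)]
    -- signs at the ρ j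
    have hsignj : ∀ j : Fin k, 0 < (-1:ℝ)^((j:ℕ)+1) * P.eval (ρ j) := by
      intro j
      have hWj : W.eval (ρ j) = 0 := by
        rw [hWeval]
        rw [Finset.prod_eq_zero (Finset.mem_univ j) (sub_self (ρ j))]
        ring
      have hW'j : (derivative W).eval (ρ j) = e * ∏ i ∈ Finset.univ.erase j, (ρ j - ρ i) := by
        rw [hfac]
        exact deriv_factored_eval e ρ j
      rw [hPeval, hWj, hW'j, mul_zero, zero_add]
      have hblock := sign_block hρa j
      have hneg : ρ j * (1 - ρ j) < 0 := by
        have h1 := hρneg j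
        nlinarith
      have e2 : (-1:ℝ)^((j:ℕ)+1) * (ρ j * (1 - ρ j) * (e * ∏ i ∈ Finset.univ.erase j, (ρ j - ρ i)))
          = (e * (-(ρ j * (1 - ρ j)))) * ((-1:ℝ)^(j:ℕ) * ∏ i ∈ Finset.univ.erase j, (ρ j - ρ i)) := by
        rw [pow_succ]
        ring
      rw [e2]
      apply mul_pos (by nlinarith) hblock
    -- far-left point
    have hfar : ∃ τ : ℝ, τ < 0 ∧ (∀ j, τ < ρ j) ∧ 0 < (-1:ℝ)^(k+1) * P.eval τ := by
      have hm1 : ((-1:ℝ)^(k+1)) ≠ 0 := by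
        apply pow_ne_zero; norm_num
      set R := C ((-1:ℝ)^(k+1)) * P.comp (-X) with hRdef
      have hcompdeg : (P.comp (-X)).natDegree = k + 1 := by
        rw [natDegree_comp, hPdeg]
        simp
      have hRdeg : R.natDegree = k + 1 := by
        rw [hRdef, natDegree_C_mul hm1, hcompdeg]
      have hRlead : R.leadingCoeff = (a - c) * e := by
        rw [hRdef, leadingCoeff_mul, leadingCoeff_C, leadingCoeff_comp (by simp), hPlead, hPdeg]
        have hlx : (-X : Polynomial ℝ).leadingCoeff = -1 := by
          rw [leadingCoeff_neg, leadingCoeff_X]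
        rw [hlx]
        have hsq : ((-1:ℝ)^(k+1)) * ((-1:ℝ)^(k+1)) = 1 := by
          rw [← pow_add, ← two_mul, pow_mul]
          norm_num
        calc ((-1:ℝ)^(k+1)) * ((a - c) * e * (-1)^(k+1))
            = (((-1:ℝ)^(k+1)) * ((-1:ℝ)^(k+1))) * ((a-c)*e) := by ring
          _ = (a - c) * e := by rw [hsq, one_mul]
      have hRtop : Tendsto (fun s => R.eval s) atTop atTop := by
        apply Polynomial.tendsto_atTop_of_leadingCoeff_nonneg
        · rw [← natDegree_pos_iff_degree_pos, hRdeg]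
          omega
        · rw [hRlead]
          nlinarith
      set M : ℝ := 1 + ∑ j : Fin k, |ρ j| with hMdef
      have hM1 : 1 ≤ M := by
        rw [hMdef]
        have h0 : 0 ≤ ∑ j : Fin k, |ρ j| := Finset.sum_nonneg (fun j _ => abs_nonneg _)
        linarith
      obtain ⟨s, hsM, hsR⟩ := ((eventually_ge_atTop M).and (hRtop.eventually_gt_atTop 0)).exists
      refine ⟨-s, by linarith, ?_, ?_⟩
      · intro j
        have h1 : |ρ j| ≤ ∑ i : Fin k, |ρ i| :=
          Finset.single_le_sum (fun i _ => abs_nonneg (ρ i)) (Finset.mem_univ j)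
        have h2 : -ρ j ≤ |ρ j| := neg_le_abs _
        have h3 : -ρ j < M := by rw [hMdef]; linarith
        linarith
      · have heval : R.eval s = (-1:ℝ)^(k+1) * P.eval (-s) := by
          rw [hRdef, eval_mul, eval_C, eval_comp]
          simp
        rw [← heval]
        exact hsR
    obtain ⟨τ, hτ0, hτρ, hτsign⟩ := hfar
    -- build the alternating point sequence
    set sn : Fin (k+1) → ℝ := Fin.snoc ρ τ with hsndef
    set t : Fin (k+2) → ℝ := Fin.cases 0 sn with htdef
    have ht0 : t 0 = 0 := rfl
    have htsucc : ∀ i : Fin (k+1), t i.succ = sn i := fun i => by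
      rw [htdef]
      exact Fin.cases_succ i
    have hsn_cast : ∀ j : Fin k, sn j.castSucc = ρ j := fun j => by
      rw [hsndef]; simp
    have hsn_last : sn (Fin.last k) = τ := by
      rw [hsndef]; simp
    have hsn_neg : ∀ i : Fin (k+1), sn i < 0 := by
      intro i
      refine Fin.lastCases ?_ ?_ i
      · rw [hsn_last]; exact hτ0
      · intro j; rw [hsn_cast]; exact hρneg j
    have htanti : StrictAnti t := by
      rw [Fin.strictAnti_iff_succ_lt]
      intro i
      refine Fin.cases ?_ ?_ i
      · show t (0 : Fin (k+1)).succ < t (Fin.castSucc 0)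
        rw [htsucc 0]
        have hcs : Fin.castSucc (0 : Fin (k+1)) = 0 := rfl
        rw [hcs, ht0]
        exact hsn_neg 0
      · intro j
        show t (j.succ).succ < t (Fin.castSucc j.succ)
        rw [← Fin.succ_castSucc, htsucc, htsucc, hsn_cast]
        rcases Fin.eq_castSucc_or_eq_last j.succ with ⟨j', hj'⟩ | hlast
        · rw [hj', hsn_cast]
          apply hρa
          have hv : (j':ℕ) = (j:ℕ) + 1 := by
            have hcv := congrArg Fin.val hj'
            simpa using hcv.symm
          rw [Fin.lt_def, hv]
          omega
        · rw [hlast, hsn_last]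
          exact hτρ j
    have hsignt : ∀ j : Fin (k+2), 0 < (-1:ℝ)^(j:ℕ) * P.eval (t j) := by
      intro j
      refine Fin.cases ?_ ?_ j
      · rw [ht0]
        simpa using hsign0
      · intro i
        rw [htsucc i]
        refine Fin.lastCases ?_ ?_ i
        · rw [hsn_last]
          have hv : (((Fin.last k).succ : Fin (k+2)):ℕ) = k + 1 := by
            simp
          rw [hv]
          exact hτsign
        · intro j'
          rw [hsn_cast]
          have hv : (((Fin.castSucc j').succ : Fin (k+2)):ℕ) = (j':ℕ) + 1 := by
            simp
          rw [hv]
          exact hsignj j'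
    obtain ⟨σ, hσanti, hσroot, hσmem⟩ := exists_alternating_roots P (k+1) t htanti hsignt
    have hσneg : ∀ j : Fin (k+1), σ j < 0 := by
      intro j
      have h1 : σ j < t j.castSucc := (hσmem j).2
      have h2 : t j.castSucc ≤ t 0 := htanti.antitone (Fin.zero_le _)
      rw [ht0] at h2
      linarith
    -- factorization
    have hinj : Function.Injective σ := hσanti.injective
    set m : Multiset ℝ := Multiset.map σ Finset.univ.val with hmdef
    have hmnodup : m.Nodup := Multiset.Nodup.map hinj Finset.univ.nodup
    have hmcard : Multiset.card m = k + 1 := by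
      rw [hmdef, Multiset.card_map]
      simp
    have hmle : m ≤ P.roots := by
      rw [Multiset.le_iff_count]
      intro x
      by_cases hx : x ∈ m
      · have h1 : m.count x = 1 := Multiset.count_eq_one_of_mem hmnodup hx
        have h2 : x ∈ P.roots := by
          rw [Polynomial.mem_roots hPne]
          obtain ⟨i, _, rfl⟩ := Multiset.mem_map.1 hx
          exact hσroot i
        rw [h1]
        exact Multiset.one_le_count_iff_mem.2 h2
      · rw [Multiset.count_eq_zero.2 hx]
        exact Nat.zero_le _
    have hcardle : Multiset.card P.roots ≤ k + 1 := by
      have hcr := Polynomial.card_roots' P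
      rw [hPdeg] at hcr
      exact hcr
    have hrootseq : P.roots = m :=
      (Multiset.eq_of_le_of_card_le hmle (by rw [hmcard]; exact hcardle)).symm
    have hfact := Polynomial.C_leadingCoeff_mul_prod_multiset_X_sub_C (p := P)
      (by rw [hrootseq, hmcard, hPdeg])
    refine ⟨(a - c)*e, σ, by nlinarith, hσanti, hσneg, ?_⟩
    rw [← hfact, hPlead]
    congr 1
    rw [hrootseq, hmdef, Multiset.map_map, Finset.prod_eq_multiset_prod]
    rfl

-- ============ glue lemmas ============

lemma asc_eq_prod (y : ℝ) (M : ℕ) : asc y M = ∏ i ∈ Finset.range M, (y + i) := by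
  induction M with
  | zero => simp [asc_zero]
  | succ m ih => rw [asc_succ, ih, Finset.prod_range_succ]

lemma asc_shift (y : ℝ) (M n : ℕ) : asc y M * asc (y + M) n = asc y (M + n) := by
  have h := ascPochhammer_mul (S := ℝ) M n
  have h2 := congrArg (Polynomial.eval y) h
  simpa [asc, Polynomial.eval_mul, Polynomial.eval_comp] using h2

lemma asc_ratio {y : ℝ} (hy : 0 < y) (M n : ℕ) :
    asc (y + M) n / asc y n
      = (∏ i ∈ Finset.range M, (y + n + i)) / (∏ i ∈ Finset.range M, (y + i)) := by
  have h1 := asc_shift y M n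
  have h2 := asc_shift y n M
  rw [Nat.add_comm n M] at h2
  have hyn : asc y n ≠ 0 := (asc_pos hy n).ne'
  have hyM : asc y M ≠ 0 := (asc_pos hy M).ne'
  rw [← asc_eq_prod (y + (n:ℝ)) M, ← asc_eq_prod y M]
  field_simp
  linear_combination h1 - h2

lemma list_range_prod (n : ℕ) (g : ℕ → ℝ) :
    ((List.range n).map g).prod = ∏ i ∈ Finset.range n, g i := by
  induction n with
  | zero => simp
  | succ m ih =>
    rw [List.range_succ, List.map_append, List.prod_append, Finset.prod_range_succ, ih]
    simp

-- ============ main theorem ============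

theorem stmt_8 (r : ℕ) (hr : 1 ≤ r) (a : ℝ) (ha : 0 < a)
    (f : Fin r → ℝ) (hf : ∀ j, 0 < f j)
    (m : Fin r → ℕ) (hm : ∀ j, 1 ≤ m j)
    (hfa : ∀ j, f j + m j < a)
    (w : Polynomial ℝ)
    (hw : ∀ x : ℝ, |x| < 1 →
      w.eval x = Real.rpow (1 - x) (((∑ j, m j : ℕ) : ℝ) + a) *
        ∑' n : ℕ, (∏ j, asc (f j + m j) n / asc (f j) n) *
          (asc a n / (n.factorial : ℝ)) * x ^ n) :
    ∀ z ∈ (w.map (algebraMap ℝ ℂ)).roots, z.im = 0 ∧ z.re < 0 := by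
  set M : ℕ := ∑ j, m j with hMdef
  set F : Fin r → List ℝ := fun j => (List.range (m j)).map (fun i : ℕ => f j + (i:ℝ)) with hFdef
  set cs : List ℝ := (List.finRange r).flatMap F with hcsdef
  have hlen : cs.length = M := by
    rw [hcsdef, List.length_flatMap, hMdef, Fin.sum_univ_def]
    congr 1
    apply List.map_congr_left
    intro j _
    simp [hFdef]
  have hmem : ∀ x ∈ cs, 0 < x ∧ x < a := by
    intro x hx
    rw [hcsdef, List.mem_flatMap] at hx
    obtain ⟨j, _, hxj⟩ := hx
    rw [hFdef] at hxj
    simp only [List.mem_map, List.mem_range] at hxj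
    obtain ⟨i, hi, rfl⟩ := hxj
    constructor
    · have := hf j
      positivity
    · have h1 := hfa j
      have h2 : (i:ℝ) + 1 ≤ (m j:ℝ) := by exact_mod_cast hi
      linarith
  have hcs0 : ∀ c ∈ cs, 0 < c := fun c hc => (hmem c hc).1
  have hprodmap : ∀ g : ℝ → ℝ,
      (cs.map g).prod = ∏ j, ∏ i ∈ Finset.range (m j), g (f j + i) := by
    intro g
    rw [hcsdef, List.map_flatMap, List.flatMap_def, List.prod_flatten, List.map_map,
      Fin.prod_univ_def]
    congr 1
    apply List.map_congr_left
    intro j _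
    simp only [Function.comp, hFdef, List.map_map]
    rw [← list_range_prod]
    congr 1
  set K := cs.prod with hK
  have hKprod : K = ∏ j, ∏ i ∈ Finset.range (m j), (f j + i) := by
    rw [hK, ← List.map_id cs, hprodmap id]
    rfl
  have hKpos : 0 < K := by
    rw [hKprod]
    exact Finset.prod_pos (fun j _ => Finset.prod_pos (fun i _ => by
      have := hf j; positivity))
  have hterm : ∀ (x : ℝ) (n : ℕ),
      (∏ j, asc (f j + m j) n / asc (f j) n) * (asc a n / (n.factorial : ℝ)) * x^n
        = K⁻¹ * term cs a x n := by
    intro x n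
    have hjj : ∀ j : Fin r, asc (f j + (m j:ℝ)) n / asc (f j) n
        = (∏ i ∈ Finset.range (m j), (f j + n + i)) / (∏ i ∈ Finset.range (m j), (f j + i)) :=
      fun j => asc_ratio (hf j) (m j) n
    rw [Finset.prod_congr rfl (fun j _ => hjj j), Finset.prod_div_distrib]
    rw [term, hprodmap (fun c => (n:ℝ) + c)]
    have hnum : ∏ j, ∏ i ∈ Finset.range (m j), (f j + (n:ℝ) + i)
        = ∏ j, ∏ i ∈ Finset.range (m j), ((n:ℝ) + (f j + i)) := by
      apply Finset.prod_congr rfl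
      intro j _
      apply Finset.prod_congr rfl
      intro i _
      ring
    rw [hnum, ← hKprod]
    have hKne : K ≠ 0 := hKpos.ne'
    field_simp
  have hweq : ∀ x : ℝ, |x| < 1 → K * w.eval x = (Wp a cs).eval x := by
    intro x hx
    have h1x : 0 < 1 - x := by have := abs_lt.1 hx; linarith [this.2]
    have hsum := main_tsum a ha cs hcs0 hx
    have hts : (∑' n : ℕ, (∏ j, asc (f j + m j) n / asc (f j) n) *
          (asc a n / (n.factorial : ℝ)) * x ^ n)
        = K⁻¹ * ((1-x) ^ (-(a + (cs.length:ℝ))) * (Wp a cs).eval x) := by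
      calc (∑' n : ℕ, (∏ j, asc (f j + m j) n / asc (f j) n) *
            (asc a n / (n.factorial : ℝ)) * x ^ n)
          = ∑' n : ℕ, K⁻¹ * term cs a x n := tsum_congr (fun n => hterm x n)
        _ = K⁻¹ * ∑' n, term cs a x n := tsum_mul_left
        _ = _ := by rw [hsum]
    rw [hw x hx, hts]
    have hcast : (cs.length : ℝ) = (M : ℝ) := by rw [hlen]
    rw [hcast]
    have hrw : Real.rpow (1-x) ((M:ℝ) + a) * ((1-x) ^ (-(a + (M:ℝ)))) = 1 := by
      show (1-x) ^ ((M:ℝ) + a) * ((1-x) ^ (-(a + (M:ℝ)))) = 1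
      rw [← Real.rpow_add h1x]
      have : (M:ℝ) + a + -(a + (M:ℝ)) = 0 := by ring
      rw [this, Real.rpow_zero]
    have hKne : K ≠ 0 := hKpos.ne'
    calc K * (Real.rpow (1-x) ((M:ℝ) + a) *
          (K⁻¹ * ((1-x) ^ (-(a + (M:ℝ))) * (Wp a cs).eval x)))
        = (K * K⁻¹) * (Real.rpow (1-x) ((M:ℝ) + a) * ((1-x) ^ (-(a + (M:ℝ)))))
          * (Wp a cs).eval x := by ring
      _ = (Wp a cs).eval x := by
          rw [hrw, mul_inv_cancel₀ hKne, one_mul, one_mul]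
  have hpoly : C K * w = Wp a cs := by
    apply Polynomial.eq_of_infinite_eval_eq
    apply Set.Infinite.mono ?_ (Set.Ioo_infinite (by norm_num : (-1:ℝ) < 1))
    intro x hx
    have hx1 : |x| < 1 := abs_lt.2 ⟨hx.1, hx.2⟩
    show eval x (C K * w) = eval x (Wp a cs)
    rw [eval_mul, eval_C]
    exact hweq x hx1
  obtain ⟨e, ρ, he, hρanti, hρneg, hfac⟩ := Wp_factored a cs hmem
  intro z hz
  obtain ⟨hwne, hroot⟩ := Polynomial.mem_roots'.1 hz
  have hKC : Polynomial.eval z ((Wp a cs).map (algebraMap ℝ ℂ)) = 0 := by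
    rw [← hpoly, Polynomial.map_mul, Polynomial.map_C, eval_mul, eval_C]
    have h0 : Polynomial.eval z (w.map (algebraMap ℝ ℂ)) = 0 := hroot
    rw [h0, mul_zero]
  rw [hfac, Polynomial.map_mul, Polynomial.map_C, Polynomial.map_prod] at hKC
  simp only [Polynomial.map_sub, Polynomial.map_X, Polynomial.map_C] at hKC
  rw [eval_mul, eval_C, eval_prod] at hKC
  simp only [eval_sub, eval_X, eval_C] at hKC
  have heC : (algebraMap ℝ ℂ e) ≠ 0 := by
    rw [show algebraMap ℝ ℂ e = (e:ℂ) from rfl]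
    exact_mod_cast he.ne'
  have hprod0 : ∏ i, (z - algebraMap ℝ ℂ (ρ i)) = 0 := by
    rcases mul_eq_zero.1 hKC with h | h
    · exact absurd h heC
    · exact h
  obtain ⟨i, _, hi⟩ := Finset.prod_eq_zero_iff.1 hprod0
  have hzi : z = algebraMap ℝ ℂ (ρ i) := sub_eq_zero.1 hi
  rw [hzi]
  constructor
  · simp
  · simpa using hρneg i
end

section
/- Let m ≥ 1 and let S_{m;n}(x) be the sequence of polynomials defined by S_{m;0}(x) = 1 and S_{m;n+1}(x) = x(1-x)S_{m;n}'(x) + (1 + mnx)S_{m;n}(x). Then for every n ≥ 1, all zeros of S_{m;n}(x) are real and negative. -/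
open Polynomial

namespace Stmt9


def altSigns (q : Polynomial ℝ) : ℝ → List ℝ → Prop
  | _, [] => True
  | ε, y :: t => 0 < ε * q.eval y ∧ altSigns q (-ε) t

lemma ivt_root (q : Polynomial ℝ) {a b : ℝ} (hab : b < a)
    (hs : q.eval a * q.eval b < 0) :
    ∃ x ∈ Set.Ioo b a, q.eval x = 0 := by
  have hc : ContinuousOn (fun x => q.eval x) (Set.Icc b a) := q.continuousOn
  rcases lt_or_ge (q.eval a) 0 with h | h
  · have hb : 0 < q.eval b := by nlinarith
    obtain ⟨x, hx, hx0⟩ := intermediate_value_Ioo' (le_of_lt hab) hc ⟨h, hb⟩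
    exact ⟨x, hx, hx0⟩
  · have ha : 0 < q.eval a := by
      rcases lt_or_eq_of_le h with h' | h'
      · exact h'
      · exfalso; rw [← h'] at hs; simp at hs
    have hb : q.eval b < 0 := by nlinarith
    obtain ⟨x, hx, hx0⟩ := intermediate_value_Ioo (le_of_lt hab) hc ⟨hb, ha⟩
    exact ⟨x, hx, hx0⟩

lemma exists_roots (q : Polynomial ℝ) :
    ∀ (l : List ℝ) (ε : ℝ), l.Pairwise (· > ·) → altSigns q ε l →
    ∃ s : Finset ℝ, s.card = l.length - 1 ∧
      ∀ x ∈ s, q.eval x = 0 ∧ (∀ y ∈ l.head?, x < y) ∧ (∀ y ∈ l.getLast?, y < x) := by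
  intro l
  induction l with
  | nil => intro ε _ _; exact ⟨∅, by simp, by simp⟩
  | cons y₀ t ih =>
    intro ε hsort halt
    cases t with
    | nil => exact ⟨∅, by simp, by simp⟩
    | cons y₁ t' =>
      have h0 : 0 < ε * q.eval y₀ := halt.1
      have h1 : 0 < (-ε) * q.eval y₁ := halt.2.1
      have hsort' : (y₁ :: t').Pairwise (· > ·) := hsort.of_cons
      have hy01 : y₁ < y₀ := (List.pairwise_cons.mp hsort).1 y₁ (by simp)
      obtain ⟨s', hcard', hs'⟩ := ih (-ε) hsort' ⟨h1, halt.2.2⟩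
      have hε : ε ≠ 0 := by rintro rfl; simp at h0
      obtain ⟨u, hu, hu0⟩ := ivt_root q hy01 (by nlinarith [mul_pos h0 h1, sq_nonneg ε])
      have hus' : u ∉ s' := by
        intro hmem
        have := (hs' u hmem).2.1 y₁ (by simp)
        exact absurd hu.1 (not_lt.mpr this.le)
      refine ⟨insert u s', ?_, ?_⟩
      · rw [Finset.card_insert_of_notMem hus', hcard']; simp
      · intro x hx
        have hlastle : ∀ y ∈ (y₁ :: t').getLast?, y ≤ y₁ := by
          intro y hy
          have hyl : y ∈ y₁ :: t' := List.mem_of_mem_getLast? hy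
          rcases List.mem_cons.mp hyl with rfl | hyt
          · exact le_refl y
          · exact ((List.pairwise_cons.mp hsort').1 y hyt).le
        rcases Finset.mem_insert.mp hx with rfl | hx'
        · refine ⟨hu0, ?_, ?_⟩
          · intro y hy; simp at hy; subst hy; exact hu.2
          · intro y hy
            rw [List.getLast?_cons_cons] at hy
            exact lt_of_le_of_lt (hlastle y hy) hu.1
        · obtain ⟨hx0, hxh, hxl⟩ := hs' x hx'
          refine ⟨hx0, ?_, ?_⟩
          · intro y hy; simp at hy; subst hy
            exact lt_trans (hxh y₁ (by simp)) hy01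
          · intro y hy; rw [List.getLast?_cons_cons] at hy; exact hxl y hy



lemma neg_prod (t : ℝ) : ∀ (a : List ℝ), (∀ s ∈ a, t < s) →
    0 < (-1 : ℝ) ^ a.length * (a.map (fun s => t - s)).prod := by
  intro a
  induction a with
  | nil => simp
  | cons x a' ih =>
    intro h
    have hx : t - x < 0 := by have := h x (by simp); linarith
    have h' := ih (fun s hs => h s (by simp [hs]))
    simp only [List.map_cons, List.prod_cons, List.length_cons]
    have e : (-1 : ℝ) ^ (a'.length + 1) * ((t - x) * (a'.map (fun s => t - s)).prod)
        = (-(t - x)) * ((-1 : ℝ) ^ a'.length * (a'.map (fun s => t - s)).prod) := by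
      rw [pow_succ]; ring
    rw [e]
    exact mul_pos (by linarith) h'

lemma pos_prod (t : ℝ) (b : List ℝ) (hb : ∀ s ∈ b, s < t) :
    0 < (b.map (fun s => t - s)).prod := by
  apply List.prod_pos
  intro x hx
  obtain ⟨s, hs, rfl⟩ := List.mem_map.mp hx
  have := hb s hs; linarith

lemma eval_prod_list (t : ℝ) (l : List ℝ) :
    ((l.map fun s => (X : Polynomial ℝ) - C s).prod).eval t = (l.map fun s => t - s).prod := by
  rw [eval_list_prod, List.map_map]
  congr 1
  ext s
  simp

lemma sign_at_root (c σ t : ℝ) (hc : 0 < c) (ht : t < 0) (a b : List ℝ)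
    (ha : ∀ s ∈ a, t < s) (hb : ∀ s ∈ b, s < t) :
    0 < (-1 : ℝ) ^ (a.length + 1) *
      (X * (1 - X) * (C c * (((a ++ t :: b).map fun s => X - C s).prod)).derivative
        + (1 + C σ * X) * (C c * (((a ++ t :: b).map fun s => X - C s).prod))).eval t := by
  set f : ℝ → Polynomial ℝ := fun s => X - C s with hf
  set g : Polynomial ℝ := C c * (a.map f).prod * (b.map f).prod with hg
  have hpfac : C c * (((a ++ t :: b).map f).prod) = (X - C t) * g := by
    rw [List.map_append, List.prod_append, List.map_cons, List.prod_cons, hg]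
    ring
  rw [hpfac]
  have hdeval : (((X - C t) * g).derivative).eval t = g.eval t := by
    rw [derivative_mul, derivative_sub, derivative_X, derivative_C]
    simp
  have heval0 : ((X - C t) * g).eval t = 0 := by simp
  rw [eval_add, eval_mul, eval_mul, eval_mul, hdeval, heval0, mul_zero, add_zero]
  have hgeval : g.eval t = c * (a.map fun s => t - s).prod * (b.map fun s => t - s).prod := by
    rw [hg, eval_mul, eval_mul, eval_C, eval_prod_list, eval_prod_list]
  have hA := neg_prod t a ha
  have hB := pos_prod t b hb
  have htt : t * (1 - t) < 0 := mul_neg_of_neg_of_pos ht (by linarith)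
  have e : (-1:ℝ) ^ (a.length + 1) *
      ((eval t X * eval t (1 - X)) * g.eval t) =
      ((-1:ℝ) ^ a.length * (a.map fun s => t - s).prod) *
        ((-(t * (1 - t))) * (c * (b.map fun s => t - s).prod)) := by
    rw [hgeval, pow_succ]
    simp only [eval_X, eval_sub, eval_one]
    ring
  rw [e]
  exact mul_pos hA (mul_pos (by linarith) (mul_pos hc hB))



lemma q_lead (p : Polynomial ℝ) (hp : p ≠ 0) (s : ℝ) (hs : (p.natDegree : ℝ) < s) :
    (X * (1 - X) * p.derivative + (1 + C s * X) * p).natDegree = p.natDegree + 1 ∧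
    (X * (1 - X) * p.derivative + (1 + C s * X) * p).leadingCoeff
      = (s - p.natDegree) * p.leadingCoeff := by
  set k := p.natDegree with hk
  set q := X * (1 - X) * p.derivative + (1 + C s * X) * p with hq
  have hlcp : p.leadingCoeff ≠ 0 := leadingCoeff_ne_zero.mpr hp
  have hz : p.coeff (k + 1) = 0 := by rw [hk]; exact coeff_natDegree_succ_eq_zero
  have hX2 : (X ^ 2 * p.derivative).coeff (k + 1) = (k : ℝ) * p.coeff k := by
    cases k with
    | zero =>
      have : X ^ 2 * p.derivative = X * (X * p.derivative) := by ring
      rw [this]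
      show (X * (X * p.derivative)).coeff (0 + 1) = _
      rw [coeff_X_mul, mul_coeff_zero, coeff_X_zero]
      simp
    | succ j =>
      have : j + 1 + 1 = j + 2 := by ring
      rw [this, coeff_X_pow_mul, coeff_derivative]
      push_cast; ring
  have hcoeff : q.coeff (k + 1) = (s - k) * p.leadingCoeff := by
    have e1 : q = X * p.derivative - X ^ 2 * p.derivative + (p + C s * (X * p)) := by
      rw [hq]; ring
    rw [e1, coeff_add, coeff_sub, coeff_X_mul, coeff_add, coeff_C_mul, coeff_X_mul, hX2,
      coeff_derivative, hz, leadingCoeff, ← hk]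
    ring
  have t1 : (X * (1 - X) * p.derivative).natDegree ≤ k + 1 := by
    rcases eq_or_ne p.derivative 0 with h | h
    · rw [h, mul_zero]; simp
    · have hk1 : 1 ≤ k := by
        by_contra hcon
        push_neg at hcon
        interval_cases k
        · obtain ⟨a, rfl⟩ := natDegree_eq_zero.mp hk.symm
          simp at h
      apply natDegree_mul_le.trans
      have h1 : (X * (1 - X) : Polynomial ℝ).natDegree ≤ 2 := by
        apply natDegree_mul_le.trans
        have h1a : (1 - X : Polynomial ℝ).natDegree ≤ 1 := by
          apply (natDegree_sub_le _ _).trans; simp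
        have := natDegree_X (R := ℝ)
        omega
      have h2 : p.derivative.natDegree ≤ k - 1 := natDegree_derivative_le p
      omega
  have t2 : ((1 + C s * X) * p).natDegree ≤ k + 1 := by
    apply natDegree_mul_le.trans
    have h1 : ((1 : Polynomial ℝ) + C s * X).natDegree ≤ 1 := by
      apply (natDegree_add_le _ _).trans
      have h1b := natDegree_C_mul_le s (X : Polynomial ℝ)
      have h1c := natDegree_X (R := ℝ)
      simp only [natDegree_one]
      omega
    omega
  have hd1 : q.natDegree ≤ k + 1 := (natDegree_add_le _ _).trans (max_le t1 t2)
  have hne : q.coeff (k + 1) ≠ 0 := by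
    rw [hcoeff]
    have h3 : (0:ℝ) < s - k := by linarith
    exact mul_ne_zero (ne_of_gt h3) hlcp
  have hdeg : q.natDegree = k + 1 := le_antisymm hd1 (le_natDegree_of_ne_zero hne)
  exact ⟨hdeg, by rw [leadingCoeff, hdeg, hcoeff]⟩

lemma alt_aux (σ c : ℝ) (hc : 0 < c) (L : List ℝ) (hL : L.Pairwise (· > ·))
    (hneg : ∀ t ∈ L, t < 0) (q : Polynomial ℝ)
    (hq : q = X * (1 - X) * (C c * ((L.map fun s => X - C s).prod)).derivative
        + (1 + C σ * X) * (C c * ((L.map fun s => X - C s).prod)))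
    (M : ℝ) (hM : 0 < (-1 : ℝ) ^ (L.length + 1) * q.eval M) :
    ∀ (b a : List ℝ), a ++ b = L → altSigns q ((-1 : ℝ) ^ (a.length + 1)) (b ++ [M]) := by
  intro b
  induction b with
  | nil =>
    intro a hab
    simp only [List.append_nil] at hab
    subst hab
    exact ⟨hM, trivial⟩
  | cons t b' ih =>
    intro a hab
    constructor
    · have hmem : t ∈ L := by rw [← hab]; simp
      have hpw := (List.pairwise_append.mp (by rw [hab]; exact hL))
      refine sign_at_root c σ t hc (hneg t hmem) a b' ?_ ?_ |>.trans_eq ?_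
      · intro s hs; exact hpw.2.2 s hs t (by simp)
      · intro s hs; exact (List.pairwise_cons.mp hpw.2.1).1 s hs
      · rw [hq, hab]
    · have h2 := ih (a ++ [t]) (by rw [← hab]; simp)
      have e : (-(-1 : ℝ) ^ (a.length + 1)) = (-1 : ℝ) ^ ((a ++ [t]).length + 1) := by
        simp [pow_succ]
      rw [e]
      exact h2

lemma alt_all (σ c : ℝ) (hc : 0 < c) (L : List ℝ) (hL : L.Pairwise (· > ·))
    (hneg : ∀ t ∈ L, t < 0) (q : Polynomial ℝ)
    (hq : q = X * (1 - X) * (C c * ((L.map fun s => X - C s).prod)).derivative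
        + (1 + C σ * X) * (C c * ((L.map fun s => X - C s).prod)))
    (M : ℝ) (hM : 0 < (-1 : ℝ) ^ (L.length + 1) * q.eval M) :
    altSigns q 1 ((0 : ℝ) :: (L ++ [M])) := by
  constructor
  · have h0 : q.eval 0 = c * ((L.map fun s => (0:ℝ) - s).prod) := by
      rw [hq]
      simp [eval_prod_list]
    rw [one_mul, h0]
    exact mul_pos hc (pos_prod 0 L hneg)
  · have := alt_aux σ c hc L hL hneg q hq M hM L [] rfl
    have e : ((-1 : ℝ) ^ (([] : List ℝ).length + 1)) = -1 := by simp
    rw [e] at this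
    exact this

lemma step (σ c : ℝ) (hc : 0 < c) (ms : Multiset ℝ) (hnd : ms.Nodup)
    (hneg : ∀ t ∈ ms, t < 0) (hσ : (Multiset.card ms : ℝ) < σ) :
    ∃ c' : ℝ, 0 < c' ∧ ∃ ms' : Multiset ℝ, ms'.Nodup ∧ (∀ t ∈ ms', t < 0) ∧
      Multiset.card ms' = Multiset.card ms + 1 ∧
      X * (1 - X) * (C c * (ms.map fun t => X - C t).prod).derivative
        + (1 + C σ * X) * (C c * (ms.map fun t => X - C t).prod)
        = C c' * (ms'.map fun t => X - C t).prod := by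
  classical
  set k := Multiset.card ms with hk
  set p : Polynomial ℝ := C c * (ms.map fun t => X - C t).prod with hp
  set q : Polynomial ℝ := X * (1 - X) * p.derivative + (1 + C σ * X) * p with hq
  -- basic facts about p
  have hmonic : ((ms.map fun t => X - C t).prod).Monic :=
    monic_multiset_prod_of_monic _ _ (fun t _ => monic_X_sub_C t)
  have hpne : p ≠ 0 := mul_ne_zero (by simp [hc.ne']) hmonic.ne_zero
  have hpdeg : p.natDegree = k := by
    rw [hp, natDegree_C_mul hc.ne', natDegree_multiset_prod_X_sub_C_eq_card]
  have hplc : p.leadingCoeff = c := by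
    rw [hp, leadingCoeff_mul, hmonic.leadingCoeff, leadingCoeff_C, mul_one]
  have hql := q_lead p hpne σ (by rw [hpdeg]; exact hσ)
  have hqdeg : q.natDegree = k + 1 := by rw [← hq] at hql; rw [hql.1, hpdeg]
  have hqlc : q.leadingCoeff = (σ - k) * c := by
    rw [← hq] at hql; rw [hql.2, hpdeg, hplc]
  have hqlcpos : 0 < q.leadingCoeff := by
    rw [hqlc]; exact mul_pos (by linarith) hc
  have hqne : q ≠ 0 := fun h => by rw [h] at hqlcpos; simp at hqlcpos
  -- the sorted list of roots of p
  set L : List ℝ := ms.sort (· ≥ ·) with hLdef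
  have hLcoe : (L : Multiset ℝ) = ms := Multiset.sort_eq _ _
  have hLlen : L.length = k := by
    rw [hk, ← hLcoe]; rfl
  have hLnd : L.Nodup := by rw [← hLcoe] at hnd; exact hnd
  have hLneg : ∀ t ∈ L, t < 0 := fun t ht => hneg t (by rw [← hLcoe]; exact ht)
  have hLsorted : L.Pairwise (· > ·) := by
    have h1 : L.Pairwise (· ≥ ·) := Multiset.pairwise_sort _ _
    exact (h1.and hLnd).imp (fun {a b} h => lt_of_le_of_ne h.1 (Ne.symm h.2))
  have hprodL : (ms.map fun t => X - C t).prod = ((L.map fun t => X - C t).prod) := by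
    rw [← hLcoe, Multiset.map_coe, Multiset.prod_coe]
  -- find M with the right sign at -∞
  obtain ⟨M, hMneg, hMlt, hMsign⟩ :
      ∃ M : ℝ, M < 0 ∧ (∀ t ∈ L, M < t) ∧ 0 < (-1 : ℝ) ^ (k + 1) * q.eval M := by
    set Q : Polynomial ℝ := C ((-1 : ℝ) ^ (k + 1)) * q.comp (-X) with hQ
    have hcompdeg : (q.comp (-X)).natDegree = k + 1 := by
      rw [natDegree_comp, hqdeg]
      simp
    have hQdeg : Q.natDegree = k + 1 := by
      rw [hQ, natDegree_C_mul (pow_ne_zero _ (by norm_num : (-1:ℝ) ≠ 0)), hcompdeg]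
    have hs2 : ((-1:ℝ) ^ (k+1)) * ((-1:ℝ) ^ (k+1)) = 1 := by
      rw [← pow_add]; exact Even.neg_one_pow ⟨k+1, by ring⟩
    have hQlc : Q.leadingCoeff = q.leadingCoeff := by
      rw [hQ, leadingCoeff_mul, leadingCoeff_C, leadingCoeff_comp (by simp), hqdeg,
        leadingCoeff_neg, leadingCoeff_X]
      linear_combination q.leadingCoeff * hs2
    have hQtop : Filter.Tendsto (fun x => Q.eval x) Filter.atTop Filter.atTop := by
      apply Polynomial.tendsto_atTop_of_leadingCoeff_nonneg
      · rw [← natDegree_pos_iff_degree_pos, hQdeg]; omega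
      · rw [hQlc]; exact hqlcpos.le
    have hev : ∀ᶠ x in Filter.atTop, 0 < Q.eval x := hQtop.eventually_gt_atTop 0
    set B : ℝ := (L.map fun t => -t).sum with hB
    have hBnn : 0 ≤ B := List.sum_nonneg (by
      intro x hx; obtain ⟨t, ht, rfl⟩ := List.mem_map.mp hx; linarith [hLneg t ht])
    obtain ⟨x, hx1, hx2⟩ := (hev.and (Filter.eventually_gt_atTop B)).exists
    refine ⟨-x, by linarith, ?_, ?_⟩
    · intro t ht
      have h1 : -t ≤ B := List.single_le_sum (by
          intro y hy; obtain ⟨u, hu, rfl⟩ := List.mem_map.mp hy; linarith [hLneg u hu]) _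
            (List.mem_map.mpr ⟨t, ht, rfl⟩)
      linarith
    · have : Q.eval x = (-1 : ℝ) ^ (k + 1) * q.eval (-x) := by
        rw [hQ, eval_mul, eval_C, eval_comp]
        simp
      rw [← this]; exact hx1
  have halt : altSigns q 1 ((0:ℝ) :: (L ++ [M])) := by
    apply alt_all σ c hc L hLsorted hLneg q ?_ M ?_
    · rw [hq, hp, hprodL]
    · rw [hLlen]; exact hMsign
  have hsortfull : ((0:ℝ) :: (L ++ [M])).Pairwise (· > ·) := by
    rw [List.pairwise_cons]
    constructor
    · intro b hb
      rcases List.mem_append.mp hb with h | h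
      · exact hLneg b h
      · simp at h; subst h; exact hMneg
    · show List.Pairwise _ _
      rw [List.pairwise_append]
      refine ⟨hLsorted, List.pairwise_singleton _ _, fun x hx y hy => ?_⟩
      simp at hy; subst hy; exact hMlt x hx
  obtain ⟨s, hscard, hsroots⟩ := exists_roots q _ 1 hsortfull halt
  have hscard' : s.card = k + 1 := by
    rw [hscard]; simp [hLlen]
  have hsneg : ∀ x ∈ s, x < 0 := fun x hx => (hsroots x hx).2.1 0 (by simp)
  have hsval : s.val ≤ q.roots := by
    rw [Multiset.le_iff_count]
    intro a
    by_cases ha : a ∈ s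
    · rw [Multiset.count_eq_one_of_mem s.nodup (Finset.mem_def.mp ha), count_roots]
      exact (rootMultiplicity_pos hqne).mpr ((hsroots a ha).1)
    · rw [Multiset.count_eq_zero_of_notMem (fun h => ha (Finset.mem_def.mpr h))]
      exact Nat.zero_le _
  have hcards : Multiset.card q.roots ≤ Multiset.card s.val := by
    have h1 := q.card_roots'
    have h2 : Multiset.card s.val = s.card := rfl
    omega
  have hrooteq : s.val = q.roots := Multiset.eq_of_le_of_card_le hsval hcards
  have hrc : Multiset.card q.roots = q.natDegree := by
    rw [← hrooteq, hqdeg]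
    show s.card = k + 1
    exact hscard'
  have hfac := C_leadingCoeff_mul_prod_multiset_X_sub_C (p := q) hrc
  refine ⟨q.leadingCoeff, hqlcpos, q.roots, ?_, ?_, ?_, ?_⟩
  · rw [← hrooteq]; exact s.nodup
  · intro t ht; rw [← hrooteq] at ht; exact hsneg t ht
  · rw [← hrooteq]
    show s.card = k + 1
    exact hscard'
  · exact hfac.symm


end Stmt9

open Stmt9 in
theorem stmt_9 (m : ℕ) (hm : 1 ≤ m) (S : ℕ → Polynomial ℝ)
    (h0 : S 0 = 1)
    (hrec : ∀ n : ℕ, S (n + 1) =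
      X * (1 - X) * (S n).derivative + (1 + C ((m : ℝ) * n) * X) * S n) :
    ∀ n : ℕ, 1 ≤ n →
      ∀ z ∈ ((S n).map (algebraMap ℝ ℂ)).roots, z.im = 0 ∧ z.re < 0 := by
  have inv : ∀ n : ℕ, 1 ≤ n → ∃ c : ℝ, 0 < c ∧ ∃ ms : Multiset ℝ, ms.Nodup ∧
      (∀ t ∈ ms, t < 0) ∧ Multiset.card ms = n - 1 ∧
      S n = C c * (ms.map fun t => X - C t).prod := by
    intro n hn
    induction n, hn using Nat.le_induction with
    | base =>
      refine ⟨1, one_pos, 0, by simp, by simp, by simp, ?_⟩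
      rw [hrec 0, h0]
      simp
    | succ n hn ih =>
      obtain ⟨c, hc, ms, hnd, hneg, hcard, hS⟩ := ih
      have hσ : (Multiset.card ms : ℝ) < (m : ℝ) * n := by
        rw [hcard]
        have hnat : n - 1 < m * n := by
          have h1 : n ≤ m * n := Nat.le_mul_of_pos_left n (by omega)
          omega
        exact_mod_cast hnat
      obtain ⟨c', hc', ms', h1, h2, h3, h4⟩ := step ((m : ℝ) * n) c hc ms hnd hneg hσ
      refine ⟨c', hc', ms', h1, h2, ?_, ?_⟩
      · rw [h3, hcard]; omega
      · rw [hrec n, hS]; exact h4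
  intro n hn z hz
  obtain ⟨c, hc, ms, hnd, hneg, hcard, hS⟩ := inv n hn
  have hmap : (S n).map (algebraMap ℝ ℂ)
      = C ((algebraMap ℝ ℂ) c) * ((ms.map (algebraMap ℝ ℂ)).map fun t => X - C t).prod := by
    rw [hS, Polynomial.map_mul, map_C, Polynomial.map_multiset_prod, Multiset.map_map,
      Multiset.map_map]
    congr 1
    refine congrArg Multiset.prod (Multiset.map_congr rfl ?_)
    intro t _
    simp
  have hcne : (algebraMap ℝ ℂ) c ≠ 0 := by
    simp only [ne_eq, _root_.map_eq_zero]
    exact hc.ne'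
  rw [hmap, roots_C_mul _ hcne, roots_multiset_prod_X_sub_C] at hz
  obtain ⟨t, ht, rfl⟩ := Multiset.mem_map.mp hz
  constructor
  · simp
  · simpa using hneg t ht
end

section
/- For d ≥ 2 and m ≥ 1, the value of the d-Narayana polynomial at 1 equals the multidimensional Catalan number: N_{d,m}(1) = (md)! · ∏_{j=0}^{d-1} j!/(m+j)!. -/
/-! The coefficients `∏ᵢ (m+i+1)_n / (i+1)_n` are the values at `n` of a polynomial `P` of degree
`md` with leading coefficient `∏ⱼ j!/(m+j)!`, because `(b+m)_n / (b)_n = (b+n)_m / (b)_m`. For any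
polynomial `P` of degree at most `D`, Newton's expansion `P(n) = ∑ₖ Δᵏ P(0) · C(n,k)` and
`∑ₙ C(n,k) xⁿ = xᵏ / (1-x)^(k+1)` give `(1-x)^(D+1) ∑ₙ P(n) xⁿ = ∑ₖ Δᵏ P(0) xᵏ (1-x)^(D-k)`.
Hence `N` is this polynomial, and its value at `1` is `Δᴰ P(0) = D! · lc P`. -/

open Polynomial

open Finset fwdDiff

theorem Polynomial.eval_natCast_eq_sum_choose_mul_fwdDiff_iter {R : Type*} [CommRing R]
    (P : R[X]) {D : ℕ} (hP : P.natDegree ≤ D) (n : ℕ) :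
    P.eval (n : R) = ∑ k ∈ range (D + 1), (n.choose k : R) * (Δ_[1])^[k] P.eval 0 := by
  have newton := shift_eq_sum_fwdDiff_iter (1 : R) P.eval n 0
  rw [zero_add, nsmul_one] at newton
  rw [newton, sum_subset (range_subset_range.2 (by omega : n + 1 ≤ n + D + 1)),
    ← sum_subset (range_subset_range.2 (by omega : D + 1 ≤ n + D + 1))]
  · simp only [nsmul_eq_mul]
  · intro k _ hk
    rw [fwdDiff_iter_eq_zero_of_degree_lt (by rw [mem_range] at hk; omega), Pi.zero_apply, smul_zero]
  · intro k _ hk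
    rw [Nat.choose_eq_zero_of_lt (by rw [mem_range] at hk; omega), zero_smul]

noncomputable def Polynomial.hStar {R : Type*} [CommRing R] (P : R[X]) (D : ℕ) : R[X] :=
  ∑ k ∈ range (D + 1), C ((Δ_[1])^[k] P.eval 0) * X ^ k * (1 - X) ^ (D - k)

theorem Polynomial.eval_one_hStar {R : Type*} [CommRing R] (P : R[X]) (D : ℕ) :
    (P.hStar D).eval 1 = (Δ_[1])^[D] P.eval 0 := by
  rw [hStar, eval_finsetSum, sum_range_succ, sum_eq_zero fun k hk ↦ ?_]
  · simp
  · simp [Nat.sub_ne_zero_of_lt (mem_range.1 hk)]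

theorem hasSum_choose_mul_geometric {𝕜 : Type*} [NormedField 𝕜] [CompleteSpace 𝕜]
    (k : ℕ) {x : 𝕜} (hx : ‖x‖ < 1) :
    HasSum (fun n ↦ (n.choose k : 𝕜) * x ^ n) (x ^ k / (1 - x) ^ (k + 1)) := by
  rw [← hasSum_nat_add_iff' k, sum_eq_zero fun i hi ↦ by
    rw [Nat.choose_eq_zero_of_lt (mem_range.1 hi), Nat.cast_zero, zero_mul], sub_zero]
  have h := (hasSum_choose_mul_geometric_of_norm_lt_one k hx).mul_left (x ^ k)
  rw [mul_one_div] at h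
  exact h.congr_fun fun n ↦ by ring

theorem Polynomial.hasSum_eval_mul_geometric {𝕜 : Type*} [NormedField 𝕜] [CompleteSpace 𝕜]
    (P : 𝕜[X]) {D : ℕ} (hP : P.natDegree ≤ D) {x : 𝕜} (hx : ‖x‖ < 1) :
    HasSum (fun n : ℕ ↦ P.eval (n : 𝕜) * x ^ n) ((P.hStar D).eval x / (1 - x) ^ (D + 1)) := by
  have hx1 : 1 - x ≠ 0 := sub_ne_zero.2 fun h ↦ by simp [← h] at hx
  have hterm : ∀ k ∈ range (D + 1), (Δ_[1])^[k] P.eval 0 * (x ^ k / (1 - x) ^ (k + 1)) =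
      (C ((Δ_[1])^[k] P.eval 0) * X ^ k * (1 - X) ^ (D - k)).eval x / (1 - x) ^ (D + 1) := by
    intro k hk
    rw [show D + 1 = D - k + (k + 1) by have := mem_range.1 hk; omega]
    simp only [eval_mul, eval_C, eval_pow, eval_X, eval_sub, eval_one]
    field_simp
    ring
  rw [hStar, eval_finsetSum, sum_div, ← sum_congr rfl hterm]
  simp_rw [P.eval_natCast_eq_sum_choose_mul_fwdDiff_iter hP, sum_mul]
  refine hasSum_sum fun k _ ↦ ?_
  exact ((hasSum_choose_mul_geometric k hx).mul_left ((Δ_[1])^[k] P.eval 0)).congr_fun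
    fun n ↦ by ring

theorem Polynomial.eq_hStar_of_eval_eq_tsum {P N : ℝ[X]} {D : ℕ} (hP : P.natDegree ≤ D)
    (hN : ∀ x : ℝ, |x| < 1 → N.eval x = (1 - x) ^ (D + 1) * ∑' n : ℕ, P.eval (n : ℝ) * x ^ n) :
    N = P.hStar D := by
  refine eq_of_infinite_eval_eq _ _ ((Set.Ioo_infinite (by norm_num : (-1 : ℝ) < 1)).mono ?_)
  intro x hx
  have hx' : |x| < 1 := abs_lt.2 hx
  have hx1 : (1 - x) ^ (D + 1) ≠ 0 := pow_ne_zero _ (by linarith [hx.2])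
  rw [Set.mem_ofPred_eq, hN x hx', (P.hasSum_eval_mul_geometric hP hx').tsum_eq,
    mul_div_cancel₀ _ hx1]

theorem asc_add_mul_asc (b : ℝ) (m n : ℕ) : asc (b + m) n * asc b m = asc b n * asc (b + n) m := by
  have h : ∀ k l : ℕ, asc b k * asc (b + k) l = asc b (k + l) := fun k l ↦ by
    simpa [asc] using congr_arg (eval b) (ascPochhammer_mul ℝ k l)
  rw [mul_comm, h, h, add_comm]

theorem asc_pos_s16 {b : ℝ} (hb : 0 < b) (n : ℕ) : 0 < asc b n := ascPochhammer_pos n b hb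

theorem asc_natCast_add_one (i m : ℕ) : asc ((i : ℝ) + 1) m = (i + m).factorial / i.factorial := by
  rw [← factorial_mul_ascPochhammer ℝ i m, asc, mul_div_cancel_left₀]
  positivity

theorem asc_add_div_asc {b : ℝ} (hb : 0 < b) (m n : ℕ) :
    asc (b + m) n / asc b n = asc (b + n) m / asc b m := by
  rw [div_eq_div_iff (asc_pos_s16 hb n).ne' (asc_pos_s16 hb m).ne', asc_add_mul_asc, mul_comm]

noncomputable def narayanaCoeffPoly (d m : ℕ) : ℝ[X] :=
  ∏ i ∈ range d, C (asc ((i : ℝ) + 1) m)⁻¹ * (ascPochhammer ℝ m).comp (X + C ((i : ℝ) + 1))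

theorem eval_natCast_narayanaCoeffPoly (d m n : ℕ) :
    (narayanaCoeffPoly d m).eval (n : ℝ) =
      ∏ i ∈ range d, asc ((m : ℝ) + i + 1) n / asc ((i : ℝ) + 1) n := by
  rw [narayanaCoeffPoly, eval_prod]
  refine prod_congr rfl fun i _ ↦ ?_
  rw [show (m : ℝ) + i + 1 = i + 1 + m by ring, asc_add_div_asc (by positivity)]
  simp only [eval_mul, eval_C, eval_comp, eval_add, eval_X, asc]
  ring_nf

theorem narayanaCoeffPoly_eq_C_mul (d m : ℕ) :
    narayanaCoeffPoly d m = C (∏ i ∈ range d, (asc ((i : ℝ) + 1) m)⁻¹) *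
      ∏ i ∈ range d, (ascPochhammer ℝ m).comp (X + C ((i : ℝ) + 1)) := by
  rw [narayanaCoeffPoly, map_prod, prod_mul_distrib]

theorem monic_prod_ascPochhammer_comp (d m : ℕ) :
    (∏ i ∈ range d, (ascPochhammer ℝ m).comp (X + C ((i : ℝ) + 1))).Monic :=
  monic_prod_of_monic _ _ fun _ _ ↦ (monic_ascPochhammer ℝ m).comp_X_add_C _

theorem natDegree_narayanaCoeffPoly (d m : ℕ) : (narayanaCoeffPoly d m).natDegree = m * d := by
  rw [narayanaCoeffPoly_eq_C_mul, natDegree_C_mul (prod_ne_zero_iff.2 fun i _ ↦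
      (inv_pos.2 (asc_pos_s16 (by positivity) m)).ne'),
    natDegree_prod_of_monic _ _ fun _ _ ↦ (monic_ascPochhammer ℝ m).comp_X_add_C _]
  simp only [natDegree_comp, ascPochhammer_natDegree, natDegree_X_add_C, mul_one, sum_const,
    card_range, smul_eq_mul]
  exact mul_comm d m

theorem leadingCoeff_narayanaCoeffPoly (d m : ℕ) :
    (narayanaCoeffPoly d m).leadingCoeff =
      ∏ j ∈ range d, (j.factorial : ℝ) / ((m + j).factorial : ℝ) := by
  rw [narayanaCoeffPoly_eq_C_mul, leadingCoeff_mul, leadingCoeff_C,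
    (monic_prod_ascPochhammer_comp d m).leadingCoeff, mul_one]
  refine prod_congr rfl fun j _ ↦ ?_
  rw [asc_natCast_add_one, inv_div, add_comm]

theorem stmt_16_general (d m : ℕ) (N : Polynomial ℝ)
    (hN : ∀ x : ℝ, |x| < 1 →
      N.eval x = (1 - x) ^ (m * d + 1) *
        ∑' n : ℕ, (∏ i ∈ Finset.range d,
          asc ((m : ℝ) + i + 1) n / asc ((i : ℝ) + 1) n) * x ^ n) :
    N.eval 1 = ((m * d).factorial : ℝ) *
      ∏ j ∈ Finset.range d, (j.factorial : ℝ) / ((m + j).factorial : ℝ) := by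
  set P := narayanaCoeffPoly d m
  have hdeg : P.natDegree = m * d := natDegree_narayanaCoeffPoly d m
  have hNP : N = P.hStar (m * d) := eq_hStar_of_eval_eq_tsum hdeg.le <| by
    simpa only [P, eval_natCast_narayanaCoeffPoly] using hN
  rw [hNP, eval_one_hStar, ← hdeg, fwdDiff_iter_degree_eq_factorial, Pi.smul_apply,
    Pi.natCast_apply, smul_eq_mul, leadingCoeff_narayanaCoeffPoly, mul_comm]

theorem stmt_16 (d m : ℕ) (hd : 2 ≤ d) (hm : 1 ≤ m) (N : Polynomial ℝ)
    (hN : ∀ x : ℝ, |x| < 1 →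
      N.eval x = (1 - x) ^ (m * d + 1) *
        ∑' n : ℕ, (∏ i ∈ Finset.range d,
          asc ((m : ℝ) + i + 1) n / asc ((i : ℝ) + 1) n) * x ^ n) :
    N.eval 1 = ((m * d).factorial : ℝ) *
      ∏ j ∈ Finset.range d, (j.factorial : ℝ) / ((m + j).factorial : ℝ) :=
  stmt_16_general d m N hN
end
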